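/- arXiv:1909.10269 — 3 statements merged into one kernel-verified Lean document; each statement's English description precedes it below -/
import Mathlib

section
/- There exist positive constants L₀, M₀ and R₀, all independent of R, such that for every R ≥ R₀ and every r ∈ [0,R], |U_R(r) − θ₀| + (r/R)^{N-1} |U_R'(r)| ≤ L₀ e^{−M₀ (R − r)}. -/
open Filter Set MeasureTheory

noncomputable section

/-- `g` is locally `τ`-Hölder continuous on `S`. -/
def LocHolderOn (τ : ℝ) (g : ℝ → ℝ) (S : Set ℝ) : Prop :=
  ∀ K : Set ℝ, K ⊆ S → IsCompact K →
    ∃ C : ℝ, ∀ x ∈ K, ∀ y ∈ K, |g x - g y| ≤ C * |x - y| ^ τ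

/-- Assumption (A1): `f ∈ C^{1,τ}_loc`, `inf f' > 0`, `f θ₀ = 0`. -/
def A1 (τ θ₀ : ℝ) (f : ℝ → ℝ) : Prop :=
  ContDiff ℝ 1 f ∧ LocHolderOn τ (deriv f) Set.univ ∧
    (∃ c > 0, ∀ t : ℝ, c ≤ deriv f t) ∧ f θ₀ = 0

/-- Assumption (A2): `e ∈ C^{1,τ}_loc`, decreasing and strictly positive. -/
def A2 (τ : ℝ) (e : ℝ → ℝ) : Prop :=
  ContDiff ℝ 1 e ∧ LocHolderOn τ (deriv e) Set.univ ∧ Antitone e ∧ ∀ t : ℝ, 0 < e t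

/-- Assumption (A3) for the coefficient pair `(a, b)`, with parameter `kstar ∈ (0,1)`. -/
def A3 (N : ℕ) (τ kstar : ℝ) (a b : ℝ → ℝ) : Prop :=
  ContDiff ℝ 2 a ∧ ContDiff ℝ 1 b ∧
  LocHolderOn τ (deriv (deriv a)) (Set.Ici 0) ∧ LocHolderOn τ (deriv b) (Set.Ici 0) ∧
  (∃ M : ℝ, ∀ r : ℝ, 0 ≤ r → a r ≤ M ∧ b r ≤ M) ∧
  (∃ c > 0, ∀ r : ℝ, 0 ≤ r → c ≤ a r ∧ c ≤ b r) ∧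
  MonotoneOn (fun r : ℝ => r ^ (N - 1) * b r) (Set.Ioi 0) ∧
  kstar ∈ Set.Ioo (0:ℝ) 1 ∧
  (∃ L > 0, Tendsto
    (fun R : ℝ => sSup ((fun r : ℝ =>
      R * (|deriv a r| + |deriv b r|) + R ^ 2 * |deriv (deriv a) r|) '' Set.Ico (kstar * R) R))
    atTop (nhds L))

/-- `U`, with derivative `U'`, is a solution of
`(r^{N-1} a U')' = r^{N-1} b f(U)` on `(0,R)`, `r^{N-1} a U' → 0` as `r → 0⁺`,
`U'(R) = e(U(R))`, of class `C¹((0,R]) ∩ C^∞((0,R))`, continuous up to `[0,R]`. -/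
def IsSol (N : ℕ) (f e a b : ℝ → ℝ) (R : ℝ) (U U' : ℝ → ℝ) : Prop :=
  ContinuousOn U (Set.Icc 0 R) ∧
  (∀ r ∈ Set.Ioc (0:ℝ) R, HasDerivWithinAt U (U' r) (Set.Icc 0 R) r) ∧
  ContinuousOn U' (Set.Ioc 0 R) ∧
  ContDiffOn ℝ (⊤ : ℕ∞) U (Set.Ioo 0 R) ∧
  (∀ r ∈ Set.Ioo (0:ℝ) R,
    HasDerivAt (fun s : ℝ => s ^ (N - 1) * a s * U' s) (r ^ (N - 1) * b r * f (U r)) r) ∧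
  Tendsto (fun r : ℝ => r ^ (N - 1) * a r * U' r) (nhdsWithin 0 (Set.Ioi 0)) (nhds 0) ∧
  U' R = e (U R)

/-- The primitive `F(t) = ∫₀ᵗ f(s) ds`. -/
def Fo (f : ℝ → ℝ) (t : ℝ) : ℝ := ∫ s in (0:ℝ)..t, f s

/-- `u`, with derivative `u'`, is a solution of the rescaled singularly perturbed problem
`ε² (u'' + ((N−1)/s + α_ε'/α_ε) u') = (β_ε/α_ε) f(u)` on `(0,1)`, `u'(0) = 0`,
`ε u'(1) = e(u(1))`, where `α_ε(s) = a(s/ε)`, `β_ε(s) = b(s/ε)`; it also records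
the facts `u ≥ θ₀` and `u' ≥ 0` on `[0,1]`. -/
def IsSolE (N : ℕ) (f e a b : ℝ → ℝ) (θ₀ ε : ℝ) (u u' : ℝ → ℝ) : Prop :=
  ContinuousOn u (Set.Icc 0 1) ∧
  (∀ s ∈ Set.Ioc (0:ℝ) 1, HasDerivWithinAt u (u' s) (Set.Icc 0 1) s) ∧
  ContinuousOn u' (Set.Ioc 0 1) ∧
  ContDiffOn ℝ (⊤ : ℕ∞) u (Set.Ioo 0 1) ∧
  (∀ s ∈ Set.Ioo (0:ℝ) 1, ∃ d : ℝ, HasDerivAt u' d s ∧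
    ε ^ 2 * (d + (((N:ℝ) - 1) / s + deriv (fun t : ℝ => a (t / ε)) s / a (s / ε)) * u' s)
      = b (s / ε) / a (s / ε) * f (u s)) ∧
  u' 0 = 0 ∧
  ε * u' 1 = e (u 1) ∧
  (∀ s ∈ Set.Icc (0:ℝ) 1, θ₀ ≤ u s ∧ 0 ≤ u' s)

/-- Monotonicity from a pointwise derivative bound on the open interval. -/
lemma mono_aux {g g' : ℝ → ℝ} {x y : ℝ} (hxy : x ≤ y)
    (hc : ContinuousOn g (Set.Icc x y))
    (hd : ∀ t ∈ Set.Ioo x y, HasDerivAt g (g' t) t)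
    (h0 : ∀ t ∈ Set.Ioo x y, 0 ≤ g' t) : g x ≤ g y := by
  have hmono : MonotoneOn g (Set.Icc x y) := by
    refine monotoneOn_of_hasDerivWithinAt_nonneg (convex_Icc x y) hc (f' := g') ?_ ?_
    · intro t ht
      rw [interior_Icc] at ht ⊢
      exact (hd t ht).hasDerivWithinAt
    · intro t ht
      rw [interior_Icc] at ht
      exact h0 t ht
  exact hmono (left_mem_Icc.2 hxy) (right_mem_Icc.2 hxy) hxy

set_option maxHeartbeats 2000000 in
/-- uniform exponential interior estimate
`|U_R(r) − θ₀| + (r/R)^{N-1} |U_R'(r)| ≤ L₀ e^{−M₀ (R − r)}`. -/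
theorem stmt_2 (N : ℕ) (hN : 2 ≤ N) (τ θ₀ kstar : ℝ) (hτ : τ ∈ Set.Ioo (0:ℝ) 1)
    (f e a b : ℝ → ℝ) (hf : A1 τ θ₀ f) (he : A2 τ e) (hab : A3 N τ kstar a b) :
    ∃ L₀ > 0, ∃ M₀ > 0, ∃ R₀ > 0, ∀ R ≥ R₀, ∀ U U' : ℝ → ℝ,
      IsSol N f e a b R U U' → (∀ r ∈ Set.Icc (0:ℝ) R, θ₀ ≤ U r) →
      ∀ r ∈ Set.Icc (0:ℝ) R,
        |U r - θ₀| + (r / R) ^ (N - 1) * |U' r| ≤ L₀ * Real.exp (-M₀ * (R - r)) := by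
  obtain ⟨hf1, -, ⟨c, hc0, hcle⟩, hfθ⟩ := hf
  obtain ⟨he1, -, heMono, hePos⟩ := he
  obtain ⟨ha2, hb1, -, -, ⟨M, hM⟩, ⟨i₀, hi₀, hinf⟩, -, -, -⟩ := hab
  -- basic positivity
  have hMpos : 0 < M := lt_of_lt_of_le hi₀ ((hinf 0 le_rfl).1.trans (hM 0 le_rfl).1)
  set e₀ := e θ₀ with he₀def
  have he₀pos : 0 < e₀ := hePos θ₀
  set A : ℝ := 2 ^ (N - 1) with hAdef
  have hApos : 0 < A := by positivity
  set β : ℝ := i₀ * c / A with hβdef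
  have hβpos : 0 < β := by
    apply div_pos (mul_pos hi₀ hc0) hApos
  have hMβ : 0 < M * β := mul_pos hMpos hβpos
  set lam : ℝ := (Real.sqrt (M * β))⁻¹ with hlamdef
  have hlampos : 0 < lam := by
    rw [hlamdef]
    exact inv_pos.2 (Real.sqrt_pos.2 hMβ)
  have hlamsq : lam ^ 2 * (M * β) = 1 := by
    rw [hlamdef, inv_pow, Real.sq_sqrt hMβ.le]
    field_simp
  set mu : ℝ := lam * β with hmudef
  have hmupos : 0 < mu := mul_pos hlampos hβpos
  have hmulam : mu * lam * M = 1 := by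
    rw [hmudef]; nlinarith [hlamsq]
  set C₅ : ℝ := A * M / i₀ with hC₅def
  have hC₅pos : 0 < C₅ := div_pos (mul_pos hApos hMpos) hi₀
  set K₁ : ℝ := Real.sqrt (4 * A * C₅ * M * e₀ ^ 2 / (i₀ * c)) + 4 * A * M * e₀ / (i₀ * c)
    with hK₁def
  have hK₁nn : 0 ≤ K₁ := by
    apply add_nonneg (Real.sqrt_nonneg _)
    positivity
  set CE : ℝ := K₁ + lam * M * e₀ with hCEdef
  have hCEpos : 0 < CE := by
    have : 0 < lam * M * e₀ := by positivity
    linarith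
  set cinv : ℝ := (lam * i₀)⁻¹ with hcinvdef
  have hcinvpos : 0 < cinv := by
    rw [hcinvdef]; exact inv_pos.2 (mul_pos hlampos hi₀)
  refine ⟨(1 + cinv) * CE, by positivity, mu / 2, by positivity, 1, one_pos, ?_⟩
  intro R hR U U' hsol hUθ
  obtain ⟨hUc, hUd, hU'c, -, hPd, hP0, hBC⟩ := hsol
  have hR0 : (0:ℝ) < R := lt_of_lt_of_le one_pos hR
  have hR2 : (0:ℝ) < R / 2 := by linarith
  set P : ℝ → ℝ := fun s : ℝ => s ^ (N - 1) * a s * U' s with hPdef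
  -- positivity of coefficients
  have hapos : ∀ r : ℝ, 0 ≤ r → 0 < a r := fun r hr => lt_of_lt_of_le hi₀ (hinf r hr).1
  have hbpos : ∀ r : ℝ, 0 ≤ r → 0 < b r := fun r hr => lt_of_lt_of_le hi₀ (hinf r hr).2
  -- f facts
  have hfd : ∀ t : ℝ, HasDerivAt f (deriv f t) t :=
    fun t => ((hf1.differentiable one_ne_zero) t).hasDerivAt
  have hflin : ∀ t : ℝ, θ₀ ≤ t → c * (t - θ₀) ≤ f t := by
    intro t ht
    have h := mono_aux (g := fun s => f s - c * s) (g' := fun s => deriv f s - c) ht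
      ((hf1.continuous.sub (continuous_const.mul continuous_id)).continuousOn)
      (fun s _ => by
        exact ((hfd s).sub ((hasDerivAt_id' s).const_mul c)).congr_deriv (by ring))
      (fun s _ => by show (0:ℝ) ≤ deriv f s - c; have := hcle s; linarith)
    simp only [hfθ] at h
    linarith
  have hfnn : ∀ t : ℝ, θ₀ ≤ t → 0 ≤ f t := by
    intro t ht
    have := hflin t ht
    nlinarith
  -- derivatives of U at interior points
  have hUD : ∀ r ∈ Set.Ioo (0:ℝ) R, HasDerivAt U (U' r) r := by
    intro r hr
    exact (hUd r ⟨hr.1, hr.2.le⟩).hasDerivAt (Icc_mem_nhds hr.1 hr.2)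
  -- P continuity, monotonicity, nonnegativity
  have hPcont : ContinuousOn P (Set.Ioc 0 R) :=
    ((continuous_pow (N - 1)).mul ha2.continuous).continuousOn.mul hU'c
  have hPd' : ∀ r ∈ Set.Ioo (0:ℝ) R, HasDerivAt P (r ^ (N - 1) * b r * f (U r)) r := hPd
  have hPderivnn : ∀ t ∈ Set.Ioo (0:ℝ) R, 0 ≤ t ^ (N - 1) * b t * f (U t) := by
    intro t ht
    have h1 := hfnn (U t) (hUθ t ⟨ht.1.le, ht.2.le⟩)
    have hb := (hbpos t ht.1.le).le
    exact mul_nonneg (mul_nonneg (pow_nonneg ht.1.le _) hb) h1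
  have hPmono : ∀ s t : ℝ, 0 < s → s ≤ t → t ≤ R → P s ≤ P t := by
    intro s t hs hst htR
    refine mono_aux hst (hPcont.mono ?_) (fun x hx => hPd' x ⟨hs.trans hx.1, hx.2.trans_le htR⟩)
      (fun x hx => hPderivnn x ⟨hs.trans hx.1, hx.2.trans_le htR⟩)
    exact fun x hx => ⟨hs.trans_le hx.1, hx.2.trans htR⟩
  have hPnn : ∀ r ∈ Set.Ioc (0:ℝ) R, 0 ≤ P r := by
    intro r hr
    refine le_of_tendsto hP0 ?_
    filter_upwards [Ioc_mem_nhdsGT_of_mem (⟨le_rfl, hr.1⟩ : (0:ℝ) ∈ Set.Ico 0 r)] with s hs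
    exact hPmono s r hs.1 hs.2 hr.2
  have hU'nn : ∀ r ∈ Set.Ioc (0:ℝ) R, 0 ≤ U' r := by
    intro r hr
    have h1 : 0 < r ^ (N - 1) * a r := mul_pos (pow_pos hr.1 _) (hapos r hr.1.le)
    have h2 : 0 ≤ r ^ (N - 1) * a r * U' r := hPnn r hr
    nlinarith
  have hUmono : ∀ s t : ℝ, 0 ≤ s → s ≤ t → t ≤ R → U s ≤ U t := by
    intro s t hs hst htR
    refine mono_aux hst (hUc.mono (Icc_subset_Icc hs htR))
      (fun x hx => hUD x ⟨hs.trans_lt hx.1, hx.2.trans_le htR⟩)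
      (fun x hx => hU'nn x ⟨hs.trans_lt hx.1, (hx.2.trans_le htR).le⟩)
  have hRmem : R ∈ Set.Icc (0:ℝ) R := ⟨hR0.le, le_rfl⟩
  have hU'Rle : U' R ≤ e₀ := by rw [hBC]; exact heMono (hUθ R hRmem)
  have hU'Rnn : 0 ≤ U' R := by rw [hBC]; exact (hePos _).le
  have hPRle : P R ≤ R ^ (N - 1) * M * e₀ := by
    have haR : a R ≤ M := (hM R hR0.le).1
    have h1 : a R * U' R ≤ M * e₀ :=
      mul_le_mul haR hU'Rle hU'Rnn hMpos.le
    calc P R = R ^ (N - 1) * (a R * U' R) := by rw [hPdef]; ring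
    _ ≤ R ^ (N - 1) * (M * e₀) := by
        exact mul_le_mul_of_nonneg_left h1 (pow_nonneg hR0.le _)
    _ = R ^ (N - 1) * M * e₀ := by ring
  -- U' is bounded by C₅ e₀ on [R/2, R]
  have hU'le : ∀ r ∈ Set.Icc (R/2) R, U' r ≤ C₅ * e₀ := by
    intro r hr
    have hr0 : 0 < r := lt_of_lt_of_le hR2 hr.1
    have h1 : P r ≤ R ^ (N - 1) * M * e₀ := (hPmono r R hr0 hr.2 le_rfl).trans hPRle
    have h2 : (R/2) ^ (N - 1) * i₀ ≤ r ^ (N - 1) * a r :=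
      mul_le_mul (pow_le_pow_left₀ hR2.le hr.1 _) (hinf r hr0.le).1 hi₀.le (pow_nonneg hr0.le _)
    have hU'r : 0 ≤ U' r := hU'nn r ⟨hr0, hr.2⟩
    have e2 : C₅ * e₀ * ((R/2) ^ (N - 1) * i₀) = R ^ (N - 1) * M * e₀ := by
      rw [hC₅def, div_pow, ← hAdef]
      field_simp
    have key : U' r * ((R/2) ^ (N - 1) * i₀) ≤ C₅ * e₀ * ((R/2) ^ (N - 1) * i₀) := by
      calc U' r * ((R/2) ^ (N - 1) * i₀) ≤ U' r * (r ^ (N - 1) * a r) :=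
            mul_le_mul_of_nonneg_left h2 hU'r
      _ = P r := by rw [hPdef]; ring
      _ ≤ R ^ (N - 1) * M * e₀ := h1
      _ = _ := e2.symm
    have hpos : (0:ℝ) < (R/2) ^ (N - 1) * i₀ := mul_pos (pow_pos hR2 _) hi₀
    exact le_of_mul_le_mul_right key hpos
  -- linear lower bound for U near R
  have hVlow : ∀ r ∈ Set.Icc (R/2) R, U R - C₅ * e₀ * (R - r) ≤ U r := by
    intro r hr
    have h := mono_aux (g := fun s => C₅ * e₀ * s - U s) (g' := fun s => C₅ * e₀ - U' s) hr.2
      ((continuous_const.mul continuous_id).continuousOn.sub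
        (hUc.mono (Icc_subset_Icc ((hR2.le.trans hr.1).trans' le_rfl) le_rfl)))
      (fun x hx => by
        exact (((hasDerivAt_id' x).const_mul (C₅ * e₀)).sub
          (hUD x ⟨lt_of_le_of_lt (hR2.le.trans hr.1) hx.1, hx.2⟩)).congr_deriv (by ring))
      (fun x hx => by
        show (0:ℝ) ≤ C₅ * e₀ - U' x
        have := hU'le x ⟨hr.1.trans hx.1.le, hx.2.le⟩
        linarith)
    linarith
  set K : ℝ := U R - θ₀ with hKdef
  have hKnn : 0 ≤ K := sub_nonneg.2 (hUθ R hRmem)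
  set δ : ℝ := min (R/2) (K / (2 * C₅ * e₀)) with hδdef
  have hC₅e₀ : (0:ℝ) < C₅ * e₀ := mul_pos hC₅pos he₀pos
  have h2C₅e₀ : (0:ℝ) < 2 * C₅ * e₀ := by
    rw [mul_assoc]; exact mul_pos two_pos hC₅e₀
  have hδnn : 0 ≤ δ := le_min hR2.le (div_nonneg hKnn h2C₅e₀.le)
  have hδle : δ ≤ R/2 := min_le_left _ _
  have hδK : C₅ * e₀ * δ ≤ K / 2 := by
    have h1 : δ ≤ K / (2 * C₅ * e₀) := min_le_right _ _
    calc C₅ * e₀ * δ ≤ C₅ * e₀ * (K / (2 * C₅ * e₀)) :=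
          mul_le_mul_of_nonneg_left h1 hC₅e₀.le
    _ = K / 2 := by
          field_simp
  have hRδ : R/2 ≤ R - δ := by linarith
  -- growth estimate
  have hgrow : (R/2) ^ (N - 1) * i₀ * (c * (K/2)) * δ ≤ P R := by
    set C₇ : ℝ := (R/2) ^ (N - 1) * i₀ * (c * (K/2)) with hC₇def
    have h := mono_aux (x := R - δ) (y := R) (g := fun s => P s - C₇ * s)
      (g' := fun s => s ^ (N - 1) * b s * f (U s) - C₇) (by linarith)
      ((hPcont.mono (fun x hx => ⟨lt_of_lt_of_le (lt_of_lt_of_le hR2 hRδ) hx.1, hx.2⟩)).sub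
        (continuous_const.mul continuous_id).continuousOn)
      (fun x hx => by
        have hx1 : 0 < x := lt_of_le_of_lt (hR2.trans_le hRδ).le hx.1
        exact (hPd' x ⟨hx1, hx.2⟩).sub (by simpa using (hasDerivAt_id x).const_mul C₇))
      (fun x hx => by
        show (0:ℝ) ≤ x ^ (N - 1) * b x * f (U x) - C₇
        have hxIcc : x ∈ Set.Icc (R/2) R := ⟨hRδ.trans hx.1.le, hx.2.le⟩
        have hx0 : 0 < x := lt_of_lt_of_le hR2 hxIcc.1
        have hVx : K / 2 ≤ U x - θ₀ := by
          have h1 := hVlow x hxIcc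
          have h2 : R - x ≤ δ := by linarith [hx.1]
          have h3 : C₅ * e₀ * (R - x) ≤ C₅ * e₀ * δ :=
            mul_le_mul_of_nonneg_left h2 hC₅e₀.le
          have hKeq : U R = K + θ₀ := by rw [hKdef]; ring
          linarith [hδK, h1, h3]
        have hfx : c * (K/2) ≤ f (U x) := by
          calc c * (K/2) ≤ c * (U x - θ₀) := mul_le_mul_of_nonneg_left hVx hc0.le
          _ ≤ f (U x) := hflin (U x) (hUθ x ⟨hx0.le, hxIcc.2⟩)
        have hxpow : (R/2) ^ (N - 1) ≤ x ^ (N - 1) := pow_le_pow_left₀ hR2.le hxIcc.1 _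
        have hbx : i₀ ≤ b x := (hinf x hx0.le).2
        have hmain : (R/2) ^ (N - 1) * i₀ * (c * (K/2)) ≤ x ^ (N - 1) * b x * f (U x) := by
          apply mul_le_mul _ hfx (mul_nonneg hc0.le (by linarith)) _
          · exact mul_le_mul hxpow hbx hi₀.le (pow_nonneg hx0.le _)
          · exact mul_nonneg (pow_nonneg hx0.le _) (hi₀.le.trans hbx)
        rw [hC₇def]; linarith)
    have hPRδ : 0 ≤ P (R - δ) := hPnn (R - δ) ⟨hR2.trans_le hRδ, by linarith⟩
    nlinarith [h, hPRδ]
  -- uniform bound K ≤ K₁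
  have hKbound : K ≤ K₁ := by
    have hmain : i₀ * (c * (K/2)) * δ ≤ A * (M * e₀) := by
      have h1 : (R/2 : ℝ) ^ (N - 1) = R ^ (N - 1) / A := by rw [hAdef, div_pow]
      have hRn : (0:ℝ) < R ^ (N - 1) := pow_pos hR0 _
      have h2 : R ^ (N - 1) * ((i₀ * (c * (K/2)) * δ) / A) ≤ R ^ (N - 1) * (M * e₀) := by
        calc R ^ (N - 1) * ((i₀ * (c * (K/2)) * δ) / A)
            = (R/2) ^ (N - 1) * i₀ * (c * (K/2)) * δ := by rw [h1]; ring
        _ ≤ P R := hgrow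
        _ ≤ R ^ (N - 1) * M * e₀ := hPRle
        _ = R ^ (N - 1) * (M * e₀) := by ring
      have h3 : (i₀ * (c * (K/2)) * δ) / A ≤ M * e₀ := le_of_mul_le_mul_left h2 hRn
      rw [div_le_iff₀ hApos] at h3
      linarith
    rcases le_or_gt (K / (2 * C₅ * e₀)) (R/2) with hcase | hcase
    · have hδeq : δ = K / (2 * C₅ * e₀) := min_eq_right hcase
      rw [hδeq] at hmain
      have hic : (0:ℝ) < i₀ * c := mul_pos hi₀ hc0
      have hK2 : K ^ 2 ≤ 4 * A * C₅ * M * e₀ ^ 2 / (i₀ * c) := by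
        rw [le_div_iff₀ hic]
        have h6 := mul_le_mul_of_nonneg_right hmain h2C₅e₀.le
        have h7 : i₀ * (c * (K/2)) * (K / (2 * C₅ * e₀)) * (2 * C₅ * e₀)
            = i₀ * c * K ^ 2 / 2 := by
          field_simp
        have h8 : A * (M * e₀) * (2 * C₅ * e₀) = 2 * A * C₅ * M * e₀ ^ 2 := by ring
        rw [h7, h8] at h6
        ring_nf at h6 ⊢
        linarith
      have hnum1 : (0:ℝ) < 4 * A * C₅ * M * e₀ ^ 2 := by
        have h4 : (0:ℝ) < 4 := by norm_num
        have := mul_pos (mul_pos (mul_pos (mul_pos h4 hApos) hC₅pos) hMpos) (pow_pos he₀pos 2)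
        linarith
      have hZnn : (0:ℝ) ≤ 4 * A * C₅ * M * e₀ ^ 2 / (i₀ * c) :=
        div_nonneg hnum1.le hic.le
      have hs1 : K ≤ Real.sqrt (4 * A * C₅ * M * e₀ ^ 2 / (i₀ * c)) :=
        (Real.le_sqrt hKnn hZnn).2 hK2
      have hnum2 : (0:ℝ) < 4 * A * M * e₀ := by
        have h4 : (0:ℝ) < 4 := by norm_num
        have := mul_pos (mul_pos (mul_pos h4 hApos) hMpos) he₀pos
        linarith
      have hs2 : (0:ℝ) ≤ 4 * A * M * e₀ / (i₀ * c) :=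
        div_nonneg hnum2.le hic.le
      rw [hK₁def]
      linarith
    · have hδeq : δ = R/2 := min_eq_left hcase.le
      rw [hδeq] at hmain
      have h4 : i₀ * (c * (K/2)) * (1/2 : ℝ) ≤ A * (M * e₀) := by
        have hKc : (0:ℝ) ≤ i₀ * (c * (K/2)) :=
          mul_nonneg hi₀.le (mul_nonneg hc0.le (by linarith))
        nlinarith [mul_le_mul_of_nonneg_left (by linarith : (1:ℝ)/2 ≤ R/2) hKc]
      have h5 : K ≤ 4 * A * M * e₀ / (i₀ * c) := by
        rw [le_div_iff₀ (mul_pos hi₀ hc0)]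
        ring_nf at h4 ⊢
        linarith
      rw [hK₁def]
      linarith [Real.sqrt_nonneg (4 * A * C₅ * M * e₀ ^ 2 / (i₀ * c))]
  -- the energy function E and its exponential decay
  set lamR : ℝ := lam / R ^ (N - 1) with hlamRdef
  have hRn : (0:ℝ) < R ^ (N - 1) := pow_pos hR0 _
  have hlamRpos : 0 < lamR := div_pos hlampos hRn
  set E : ℝ → ℝ := fun s : ℝ => (U s - θ₀) + lamR * P s with hEdef
  have hER : E R ≤ CE := by
    have h1 : E R = K + lam * (a R * U' R) := by
      rw [hEdef]
      simp only
      rw [hPdef]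
      simp only
      rw [hlamRdef, hKdef]
      field_simp
    have h2 : a R * U' R ≤ M * e₀ := mul_le_mul (hM R hR0.le).1 hU'Rle hU'Rnn hMpos.le
    have h3 : lam * (a R * U' R) ≤ lam * (M * e₀) := mul_le_mul_of_nonneg_left h2 hlampos.le
    rw [h1, hCEdef]
    have h4 : lam * (M * e₀) = lam * M * e₀ := by ring
    linarith only [hKbound, h3, h4]
  have hEnn : ∀ r ∈ Set.Ioc (0:ℝ) R, 0 ≤ E r := by
    intro r hr
    have h1 : 0 ≤ U r - θ₀ := sub_nonneg.2 (hUθ r ⟨hr.1.le, hr.2⟩)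
    have h2 : 0 ≤ lamR * P r := mul_nonneg hlamRpos.le (hPnn r hr)
    rw [hEdef]; simp only; linarith only [h1, h2]
  have hEcont : ContinuousOn E (Set.Ioc 0 R) :=
    ((hUc.mono Ioc_subset_Icc_self).sub continuousOn_const).add
      (continuousOn_const.mul hPcont)
  have hEd : ∀ x ∈ Set.Ioo (0:ℝ) R,
      HasDerivAt E (U' x + lamR * (x ^ (N - 1) * b x * f (U x))) x := by
    intro x hx
    exact ((hUD x hx).sub_const θ₀).add ((hPd' x hx).const_mul lamR)
  -- key differential inequality on [R/2, R]
  have hKey : ∀ x ∈ Set.Ioo (0:ℝ) R, R/2 ≤ x →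
      mu * E x ≤ U' x + lamR * (x ^ (N - 1) * b x * f (U x)) := by
    intro x hx hxhalf
    have hx0 : 0 < x := hx.1
    have hpx : 0 ≤ P x := hPnn x ⟨hx0, hx.2.le⟩
    -- part 1 : mu * (lamR * P x) ≤ U' x
    have hmulamM : mu * lam = 1 / M := by
      rw [eq_div_iff hMpos.ne']
      exact hmulam
    have hxa : 0 < x ^ (N - 1) * a x := mul_pos (pow_pos hx0 _) (hapos x hx0.le)
    have h1 : x ^ (N - 1) * a x ≤ R ^ (N - 1) * M :=
      mul_le_mul (pow_le_pow_left₀ hx0.le hx.2.le _) (hM x hx0.le).1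
        (hapos x hx0.le).le (pow_nonneg hR0.le _)
    have h2 : P x / (R ^ (N - 1) * M) ≤ P x / (x ^ (N - 1) * a x) :=
      div_le_div_of_nonneg_left hpx hxa h1
    have h3 : P x / (x ^ (N - 1) * a x) = U' x := by
      rw [hPdef]
      simp only
      rw [mul_comm (x ^ (N - 1)) (a x), mul_assoc]
      rw [mul_comm (a x) (x ^ (N - 1) * U' x)]
      rw [mul_comm (x ^ (N - 1)) (U' x)]
      field_simp [hxa.ne', (hapos x hx0.le).ne', (pow_pos hx0 (N - 1)).ne']
    have h4 : mu * (lamR * P x) = P x / (R ^ (N - 1) * M) := by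
      have h4a : mu * (lamR * P x) = (mu * lam) * (P x / R ^ (N - 1)) := by
        rw [hlamRdef]; ring
      rw [h4a, hmulamM, div_mul_div_comm, one_mul, mul_comm M (R ^ (N - 1))]
    have part1 : mu * (lamR * P x) ≤ U' x := by
      rw [h4, ← h3]; exact h2
    -- part 2 : mu * (U x - θ₀) ≤ lamR * (x^(N-1) * b x * f (U x))
    have hV : 0 ≤ U x - θ₀ := sub_nonneg.2 (hUθ x ⟨hx0.le, hx.2.le⟩)
    have hfU : c * (U x - θ₀) ≤ f (U x) := hflin (U x) (hUθ x ⟨hx0.le, hx.2.le⟩)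
    have hxn : R ^ (N - 1) / A ≤ x ^ (N - 1) := by
      rw [hAdef, ← div_pow]
      exact pow_le_pow_left₀ hR2.le hxhalf _
    have hbx : i₀ ≤ b x := (hinf x hx0.le).2
    have h5 : (R ^ (N - 1) / A) * (i₀ * (c * (U x - θ₀))) ≤ x ^ (N - 1) * (b x * f (U x)) := by
      apply mul_le_mul hxn _ _ (pow_nonneg hx0.le _)
      · exact mul_le_mul hbx hfU (mul_nonneg hc0.le hV) (hi₀.le.trans hbx)
      · exact mul_nonneg hi₀.le (mul_nonneg hc0.le hV)
    have h6 : mu * (U x - θ₀) = lamR * ((R ^ (N - 1) / A) * (i₀ * (c * (U x - θ₀)))) := by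
      rw [hlamRdef, hmudef, hβdef]
      field_simp
    have part2 : mu * (U x - θ₀) ≤ lamR * (x ^ (N - 1) * b x * f (U x)) := by
      rw [h6]
      have := mul_le_mul_of_nonneg_left h5 hlamRpos.le
      calc lamR * (R ^ (N - 1) / A * (i₀ * (c * (U x - θ₀))))
          ≤ lamR * (x ^ (N - 1) * (b x * f (U x))) := this
      _ = lamR * (x ^ (N - 1) * b x * f (U x)) := by ring
    have hEx : mu * E x = mu * (U x - θ₀) + mu * (lamR * P x) := by
      rw [hEdef]; simp only; ring
    rw [hEx]
    linarith only [part1, part2]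
  -- Gronwall on [R/2, R]
  have hGron : ∀ r ∈ Set.Icc (R/2) R, E r ≤ Real.exp (-(mu * (R - r))) * E R := by
    intro r hr
    have hr0 : 0 < r := lt_of_lt_of_le hR2 hr.1
    have h := mono_aux (x := r) (y := R)
      (g := fun s => Real.exp (-(mu * s)) * E s)
      (g' := fun s => Real.exp (-(mu * s)) *
        ((U' s + lamR * (s ^ (N - 1) * b s * f (U s))) - mu * E s)) hr.2
      (((Real.continuous_exp.comp (continuous_const.mul continuous_id).neg).continuousOn).mul
        (hEcont.mono (fun x hx => ⟨lt_of_lt_of_le hr0 hx.1, hx.2⟩)))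
      (fun x hx => by
        have hx' : x ∈ Set.Ioo (0:ℝ) R := ⟨lt_of_le_of_lt hr0.le hx.1, hx.2⟩
        have hexp : HasDerivAt (fun s : ℝ => Real.exp (-(mu * s)))
            (Real.exp (-(mu * x)) * (-mu)) x := by
          have := (((hasDerivAt_id x).const_mul mu).neg).exp
          simpa using this
        have := hexp.mul (hEd x hx')
        exact this.congr_deriv (by ring))
      (fun x hx => by
        have hx' : x ∈ Set.Ioo (0:ℝ) R := ⟨lt_of_le_of_lt hr0.le hx.1, hx.2⟩
        have hxhalf : R/2 ≤ x := hr.1.trans hx.1.le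
        have hk := hKey x hx' hxhalf
        have hexpnn : (0:ℝ) ≤ Real.exp (-(mu * x)) := (Real.exp_pos _).le
        exact mul_nonneg hexpnn (by linarith only [hk]))
    have hgoal : Real.exp (-(mu * r)) * E r ≤ Real.exp (-(mu * R)) * E R := h
    have hexppos : (0:ℝ) < Real.exp (-(mu * r)) := Real.exp_pos _
    have hfac : Real.exp (-(mu * R)) * E R
        = Real.exp (-(mu * r)) * (Real.exp (-(mu * (R - r))) * E R) := by
      have hsum : -(mu * r) + -(mu * (R - r)) = -(mu * R) := by ring
      rw [← mul_assoc, ← Real.exp_add, hsum]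
    rw [hfac] at hgoal
    exact le_of_mul_le_mul_left hgoal hexppos
  -- combine into a uniform decay bound for E on (0, R]
  have hEbound : ∀ s ∈ Set.Ioc (0:ℝ) R, E s ≤ CE * Real.exp (-(mu/2) * (R - s)) := by
    intro s hs
    have hERnn : 0 ≤ E R := hEnn R ⟨hR0, le_rfl⟩
    rcases le_or_gt (R/2) s with hcase | hcase
    · have h := hGron s ⟨hcase, hs.2⟩
      have hexple : Real.exp (-(mu * (R - s))) ≤ Real.exp (-(mu/2) * (R - s)) := by
        apply Real.exp_le_exp.2
        nlinarith only [hmupos, hs.2]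
      calc E s ≤ Real.exp (-(mu * (R - s))) * E R := h
      _ ≤ Real.exp (-(mu/2) * (R - s)) * CE := by
          apply mul_le_mul hexple hER hERnn (Real.exp_pos _).le
      _ = CE * Real.exp (-(mu/2) * (R - s)) := by ring
    · have hE2 : E s ≤ E (R/2) := by
        have h1 : U s ≤ U (R/2) := hUmono s (R/2) hs.1.le hcase.le (by linarith)
        have h2 : P s ≤ P (R/2) := hPmono s (R/2) hs.1 hcase.le (by linarith)
        rw [hEdef]; simp only
        have h3 := mul_le_mul_of_nonneg_left h2 hlamRpos.le
        linarith only [h1, h3]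
      have h := hGron (R/2) ⟨le_rfl, by linarith⟩
      have hexple : Real.exp (-(mu * (R - R/2))) ≤ Real.exp (-(mu/2) * (R - s)) := by
        apply Real.exp_le_exp.2
        nlinarith only [hmupos, hs.1]
      calc E s ≤ E (R/2) := hE2
      _ ≤ Real.exp (-(mu * (R - R/2))) * E R := h
      _ ≤ Real.exp (-(mu/2) * (R - s)) * CE := by
          apply mul_le_mul hexple hER hERnn (Real.exp_pos _).le
      _ = CE * Real.exp (-(mu/2) * (R - s)) := by ring
  -- final assembly on (0, R]
  have hFinal : ∀ s ∈ Set.Ioc (0:ℝ) R,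
      (U s - θ₀) + (s/R) ^ (N - 1) * U' s ≤ (1 + cinv) * CE * Real.exp (-(mu/2) * (R - s)) := by
    intro s hs
    have hs0 : 0 < s := hs.1
    have hV : 0 ≤ U s - θ₀ := sub_nonneg.2 (hUθ s ⟨hs0.le, hs.2⟩)
    have hPs : 0 ≤ P s := hPnn s hs
    have h1 : (s/R) ^ (N - 1) * U' s = P s / (R ^ (N - 1) * a s) := by
      rw [div_pow, hPdef]
      simp only
      field_simp [(hapos s hs0.le).ne', hRn.ne']
    have h2 : P s / (R ^ (N - 1) * a s) ≤ cinv * (lamR * P s) := by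
      have ha : i₀ ≤ a s := (hinf s hs0.le).1
      have hRi : (0:ℝ) < R ^ (N - 1) * i₀ := mul_pos hRn hi₀
      have hle : R ^ (N - 1) * i₀ ≤ R ^ (N - 1) * a s :=
        mul_le_mul_of_nonneg_left ha hRn.le
      have h3 : P s / (R ^ (N - 1) * a s) ≤ P s / (R ^ (N - 1) * i₀) :=
        div_le_div_of_nonneg_left hPs hRi hle
      have h4 : cinv * (lamR * P s) = P s / (R ^ (N - 1) * i₀) := by
        rw [hcinvdef, hlamRdef]
        field_simp
      rw [h4]
      exact h3
    have h5 : (U s - θ₀) + (s/R) ^ (N - 1) * U' s ≤ (1 + cinv) * E s := by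
      rw [h1]
      have h6 : 0 ≤ lamR * P s := mul_nonneg hlamRpos.le hPs
      have hE : E s = (U s - θ₀) + lamR * P s := by rw [hEdef]
      have h7 : 0 ≤ cinv * (U s - θ₀) := mul_nonneg hcinvpos.le hV
      rw [hE]
      have h8 : (1 + cinv) * ((U s - θ₀) + lamR * P s)
          = (U s - θ₀) + lamR * P s + cinv * (U s - θ₀) + cinv * (lamR * P s) := by
        ring
      rw [h8]
      linarith only [h2, h6, h7]
    calc (U s - θ₀) + (s/R) ^ (N - 1) * U' s ≤ (1 + cinv) * E s := h5
    _ ≤ (1 + cinv) * (CE * Real.exp (-(mu/2) * (R - s))) := by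
        apply mul_le_mul_of_nonneg_left (hEbound s hs) (by linarith [hcinvpos])
    _ = (1 + cinv) * CE * Real.exp (-(mu/2) * (R - s)) := by ring
  -- conclusion
  intro r hr
  have hNm1 : N - 1 ≠ 0 := by omega
  rcases eq_or_lt_of_le hr.1 with h0 | h0
  · -- r = 0
    rw [← h0]
    have hz : ((0:ℝ)/R) ^ (N - 1) = 0 := by
      rw [zero_div, zero_pow hNm1]
    rw [hz, zero_mul, add_zero]
    have habs : |U 0 - θ₀| = U 0 - θ₀ :=
      abs_of_nonneg (sub_nonneg.2 (hUθ 0 ⟨le_rfl, hR0.le⟩))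
    rw [habs]
    have hcont : Continuous fun s : ℝ => (1 + cinv) * CE * Real.exp (-(mu/2) * (R - s)) :=
      continuous_const.mul (Real.continuous_exp.comp
        (continuous_const.mul (continuous_const.sub continuous_id)))
    have hlim : Tendsto (fun s : ℝ => (1 + cinv) * CE * Real.exp (-(mu/2) * (R - s)))
        (nhdsWithin 0 (Set.Ioi 0)) (nhds ((1 + cinv) * CE * Real.exp (-(mu/2) * (R - 0)))) :=
      (hcont.tendsto 0).mono_left nhdsWithin_le_nhds
    refine ge_of_tendsto hlim ?_
    filter_upwards [Ioc_mem_nhdsGT_of_mem (⟨le_rfl, hR0⟩ : (0:ℝ) ∈ Set.Ico 0 R)] with s hs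
    have h1 : U 0 ≤ U s := hUmono 0 s le_rfl hs.1.le hs.2
    have h2 := hFinal s hs
    have h3 : 0 ≤ (s/R) ^ (N - 1) * U' s :=
      mul_nonneg (pow_nonneg (div_nonneg hs.1.le hR0.le) _) (hU'nn s hs)
    linarith only [h2, h3, h1]
  · -- r > 0
    have hmem : r ∈ Set.Ioc (0:ℝ) R := ⟨h0, hr.2⟩
    have habs1 : |U r - θ₀| = U r - θ₀ :=
      abs_of_nonneg (sub_nonneg.2 (hUθ r hr))
    have habs2 : |U' r| = U' r := abs_of_nonneg (hU'nn r hmem)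
    rw [habs1, habs2]
    have h2 := hFinal r hmem
    calc (U r - θ₀) + (r/R) ^ (N - 1) * U' r
        ≤ (1 + cinv) * CE * Real.exp (-(mu/2) * (R - r)) := h2
    _ = (1 + cinv) * CE * Real.exp (-(mu/2) * (R - r)) := rfl

end
end

section
/- There exist ε* > 0 and M* > 0, independent of ε, such that for all ε ∈ (0, ε*) and all s ∈ [0,1], 0 ≤ u_ε(s) − θ₀ ≤ 2 (u_ε(1) − θ₀) e^{−(M*/ε)(1−s)}. -/
open Filter Set MeasureTheory

noncomputable section

lemma maxprin (s₀ : ℝ) (h01 : s₀ < 1)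
    (w w' ρ W' : ℝ → ℝ)
    (hwc : ContinuousOn w (Set.Icc s₀ 1))
    (hw : ∀ x ∈ Set.Ioo s₀ 1, HasDerivAt w (w' x) x)
    (hW : ∀ x ∈ Set.Ioo s₀ 1, HasDerivAt (fun y => ρ y * w' y) (W' x) x)
    (hρ : ∀ x ∈ Set.Ioo s₀ 1, 0 < ρ x)
    (hkey : ∀ x ∈ Set.Ioo s₀ 1, 0 ≤ w x → 0 ≤ W' x)
    (hb0 : w s₀ ≤ 0) (hb1 : w 1 ≤ 0) :
    ∀ x ∈ Set.Icc s₀ 1, w x ≤ 0 := by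
  intro z hz
  by_contra hzpos
  push_neg at hzpos
  obtain ⟨m, hm, hmax⟩ := isCompact_Icc.exists_isMaxOn (Set.nonempty_Icc.2 h01.le) hwc
  have hwm : 0 < w m := lt_of_lt_of_le hzpos (hmax hz)
  have hms₀ : s₀ < m := lt_of_le_of_ne hm.1 (by rintro rfl; linarith)
  have hm1 : m < 1 := lt_of_le_of_ne hm.2 (by rintro rfl; linarith)
  set S1 : Set ℝ := Set.Icc s₀ m ∩ w ⁻¹' (Set.Iic 0) with hS1def
  have hS1c : IsClosed S1 :=
    (hwc.mono (Set.Icc_subset_Icc le_rfl hm.2)).preimage_isClosed_of_isClosed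
      isClosed_Icc isClosed_Iic
  have hS1ne : S1.Nonempty := ⟨s₀, ⟨le_rfl, hms₀.le⟩, hb0⟩
  have hS1bdd : BddAbove S1 := ⟨m, fun y hy => hy.1.2⟩
  set p := sSup S1 with hpdef
  have hpS1 : p ∈ S1 := hS1c.csSup_mem hS1ne hS1bdd
  have hp : w p ≤ 0 := hpS1.2
  have hpm : p < m := lt_of_le_of_ne hpS1.1.2 (by rintro h; rw [h] at hp; linarith)
  have hps₀ : s₀ ≤ p := hpS1.1.1
  have hwpos1 : ∀ y, p < y → y ≤ m → 0 < w y := by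
    intro y h1 h2
    by_contra h
    push_neg at h
    have hy : y ∈ S1 := ⟨⟨le_trans hps₀ h1.le, h2⟩, h⟩
    have := le_csSup hS1bdd hy
    linarith
  set S2 : Set ℝ := Set.Icc m 1 ∩ w ⁻¹' (Set.Iic 0) with hS2def
  have hS2c : IsClosed S2 :=
    (hwc.mono (Set.Icc_subset_Icc hm.1 le_rfl)).preimage_isClosed_of_isClosed
      isClosed_Icc isClosed_Iic
  have hS2ne : S2.Nonempty := ⟨1, ⟨hm.2, le_rfl⟩, hb1⟩
  have hS2bdd : BddBelow S2 := ⟨m, fun y hy => hy.1.1⟩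
  set q := sInf S2 with hqdef
  have hqS2 : q ∈ S2 := hS2c.csInf_mem hS2ne hS2bdd
  have hq : w q ≤ 0 := hqS2.2
  have hmq : m < q := lt_of_le_of_ne hqS2.1.1 (by rintro h; rw [← h] at hq; linarith)
  have hq1 : q ≤ 1 := hqS2.1.2
  have hwpos2 : ∀ y, m ≤ y → y < q → 0 < w y := by
    intro y h1 h2
    by_contra h
    push_neg at h
    have hy : y ∈ S2 := ⟨⟨h1, le_trans h2.le hq1⟩, h⟩
    have := csInf_le hS2bdd hy
    linarith
  obtain ⟨x₁, hx₁, hslope₁⟩ := exists_hasDerivAt_eq_slope w w' hpm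
    (hwc.mono (Set.Icc_subset_Icc hps₀ hm.2))
    (fun x hx => hw x ⟨lt_of_le_of_lt hps₀ hx.1, lt_trans hx.2 hm1⟩)
  have hw'x₁ : 0 < w' x₁ := by
    rw [hslope₁]
    apply div_pos (by linarith) (by linarith)
  obtain ⟨x₂, hx₂, hslope₂⟩ := exists_hasDerivAt_eq_slope w w' hmq
    (hwc.mono (Set.Icc_subset_Icc (le_trans hps₀ hpm.le) hq1))
    (fun x hx => hw x ⟨lt_trans hms₀ hx.1, lt_of_lt_of_le hx.2 hq1⟩)
  have hw'x₂ : w' x₂ < 0 := by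
    rw [hslope₂]
    apply div_neg_of_neg_of_pos (by linarith) (by linarith)
  have hx₁x₂ : x₁ < x₂ := lt_trans hx₁.2 hx₂.1
  have hsub : Set.Icc x₁ x₂ ⊆ Set.Ioo s₀ 1 := by
    intro x hx
    exact ⟨lt_of_le_of_lt hps₀ (lt_of_lt_of_le hx₁.1 hx.1),
      lt_of_le_of_lt hx.2 (lt_of_lt_of_le hx₂.2 hq1)⟩
  have hwnn : ∀ x ∈ Set.Icc x₁ x₂, 0 ≤ w x := by
    intro x hx
    rcases le_total x m with h | h
    · exact (hwpos1 x (lt_of_lt_of_le hx₁.1 hx.1) h).le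
    · exact (hwpos2 x h (lt_of_le_of_lt hx.2 hx₂.2)).le
  have hWmono : MonotoneOn (fun y => ρ y * w' y) (Set.Icc x₁ x₂) := by
    apply monotoneOn_of_deriv_nonneg (convex_Icc _ _)
    · exact fun x hx => ((hW x (hsub hx)).continuousAt).continuousWithinAt
    · intro x hx
      rw [interior_Icc] at hx
      exact ((hW x (hsub (Set.Ioo_subset_Icc_self hx))).differentiableAt).differentiableWithinAt
    · intro x hx
      rw [interior_Icc] at hx
      have hx' := Set.Ioo_subset_Icc_self hx
      rw [(hW x (hsub hx')).deriv]
      exact hkey x (hsub hx') (hwnn x hx')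
  have h1 : 0 < ρ x₁ * w' x₁ :=
    mul_pos (hρ x₁ (hsub ⟨le_rfl, hx₁x₂.le⟩)) hw'x₁
  have h2 : ρ x₂ * w' x₂ < 0 :=
    mul_neg_of_pos_of_neg (hρ x₂ (hsub ⟨hx₁x₂.le, le_rfl⟩)) hw'x₂
  have := hWmono ⟨le_rfl, hx₁x₂.le⟩ ⟨hx₁x₂.le, le_rfl⟩ hx₁x₂.le
  simp only at this
  linarith

lemma aprime_bound (a b : ℝ → ℝ) (kstar L : ℝ) (hk : kstar ∈ Set.Ioo (0:ℝ) 1)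
    (hca : Continuous (deriv a)) (hcb : Continuous (deriv b))
    (hcaa : Continuous (deriv (deriv a)))
    (htend : Tendsto (fun R : ℝ => sSup ((fun r : ℝ =>
      R * (|deriv a r| + |deriv b r|) + R ^ 2 * |deriv (deriv a) r|) '' Set.Ico (kstar * R) R))
    atTop (nhds L)) :
    ∃ R₀ : ℝ, 1 ≤ R₀ ∧ ∀ r : ℝ, R₀ ≤ r → |deriv a r| ≤ (L + 1) / r := by
  obtain ⟨R₁, hR₁⟩ := (htend.eventually_lt_const (by linarith : L < L + 1)).exists_forall_of_atTop
  refine ⟨max R₁ 1, le_max_right _ _, ?_⟩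
  intro r hr
  have hr1 : (1:ℝ) ≤ r := le_trans (le_max_right _ _) hr
  have hrpos : 0 < r := by linarith
  have hk0 := hk.1
  have hk1 := hk.2
  set R := r / kstar with hRdef
  have hrR : r < R := by
    rw [lt_div_iff₀ hk0]; nlinarith
  have hkR : kstar * R = r := by rw [hRdef]; field_simp
  have hmem : r ∈ Set.Ico (kstar * R) R := by
    rw [hkR]; exact ⟨le_rfl, hrR⟩
  have hcont : Continuous (fun r : ℝ =>
      R * (|deriv a r| + |deriv b r|) + R ^ 2 * |deriv (deriv a) r|) := by
    continuity
  have hbdd : BddAbove ((fun r : ℝ =>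
      R * (|deriv a r| + |deriv b r|) + R ^ 2 * |deriv (deriv a) r|) '' Set.Ico (kstar * R) R) := by
    apply BddAbove.mono (Set.image_mono Set.Ico_subset_Icc_self)
    exact (isCompact_Icc.image hcont).bddAbove
  have hle : R * (|deriv a r| + |deriv b r|) + R ^ 2 * |deriv (deriv a) r| ≤ L + 1 := by
    have h1 := le_csSup hbdd (Set.mem_image_of_mem _ hmem)
    have h2 : sSup ((fun r : ℝ =>
        R * (|deriv a r| + |deriv b r|) + R ^ 2 * |deriv (deriv a) r|) '' Set.Ico (kstar * R) R)
        < L + 1 := by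
      apply hR₁
      calc R₁ ≤ max R₁ 1 := le_max_left _ _
      _ ≤ r := hr
      _ ≤ R := hrR.le
    linarith
  have hRpos : 0 < R := lt_trans hrpos hrR
  have habs : R * |deriv a r| ≤ L + 1 := by
    nlinarith [abs_nonneg (deriv b r), abs_nonneg (deriv (deriv a) r), abs_nonneg (deriv a r),
      sq_nonneg R]
  rw [le_div_iff₀ hrpos]
  calc |deriv a r| * r ≤ |deriv a r| * R := by nlinarith [abs_nonneg (deriv a r)]
  _ ≤ (L + 1) := by nlinarith [abs_nonneg (deriv a r)]

lemma emono_aux (μ p q : ℝ) (hμ : 0 < μ) (h : p ≤ q) :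
    Real.exp (-(μ*q)) ≤ Real.exp (-(μ*p)) :=
  Real.exp_le_exp.2 (by nlinarith)

lemma ehalf_aux (μ : ℝ) (h : Real.log 2 ≤ μ/4) : Real.exp (-(μ*(1/4))) ≤ 1/2 := by
  have h1 : Real.exp (-(μ*(1/4))) ≤ Real.exp (-Real.log 2) := Real.exp_le_exp.2 (by linarith)
  have h2 : Real.exp (-Real.log 2) = 1/2 := by
    rw [Real.exp_neg, Real.exp_log (by norm_num : (0:ℝ) < 2)]
    norm_num
  rw [h2] at h1
  exact h1

lemma mu4_aux (M ε l2 : ℝ) (hε0 : 0 < ε) (hl2 : 0 < l2) (h : ε < M/(4*l2)) :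
    l2 ≤ M/ε/4 := by
  rw [div_div, le_div_iff₀ (by positivity)]
  have := (lt_div_iff₀ (by positivity : (0:ℝ) < 4*l2)).1 h
  nlinarith

lemma babs_aux (v1 vs0 μ E1 E2 : ℝ) (hv1 : 0 ≤ v1) (hvs0 : 0 ≤ vs0) (hμ : 0 < μ)
    (hE1 : 0 < E1) (hE2 : 0 < E2) :
    |v1*(μ*E1) - vs0*(μ*E2)| ≤ μ*(v1*E1 + vs0*E2) := by
  rw [abs_le]
  constructor <;>
    nlinarith [mul_nonneg (mul_nonneg hv1 hμ.le) hE1.le,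
      mul_nonneg (mul_nonneg hvs0 hμ.le) hE2.le]

lemma e5_aux (M P A amax : ℝ) (hM0 : 0 < M) (hM1 : M ≤ 1) (hP : 0 < P) (hA : 0 < A)
    (hAup : A ≤ amax) : M^2*(P*A) ≤ M*(amax*P) := by
  have hA0 : (0:ℝ) ≤ amax := le_trans hA.le hAup
  have h1 : M^2*(P*A) ≤ M^2*(P*amax) :=
    mul_le_mul_of_nonneg_left (mul_le_mul_of_nonneg_left hAup hP.le) (sq_nonneg M)
  have h2 : M^2*(P*amax) ≤ M*(P*amax) :=
    mul_le_mul_of_nonneg_right (by nlinarith : M^2 ≤ M) (mul_nonneg hP.le hA0)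
  have h3 : M*(P*amax) = M*(amax*P) := by ring
  linarith

lemma e8_aux (c cab P B : ℝ) (hc : 0 < c) (hP : 0 < P) (hbx : cab ≤ B) :
    c*cab*P ≤ c*(P*B) := by
  nlinarith [mul_le_mul_of_nonneg_left hbx (mul_nonneg hc.le hP.le)]

lemma keyfinal_aux (c ε2 m F v B S : ℝ) (hm : 0 ≤ m) (hc : 0 < c) (hε2 : 0 < ε2)
    (hS : S ≤ c/ε2 * (m*B)) (hF : c*v ≤ F) (hvB : B ≤ v) :
    0 ≤ m*F/ε2 - S := by
  have h1 : c/ε2*(m*B) ≤ c/ε2*(m*v) := by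
    apply mul_le_mul_of_nonneg_left (mul_le_mul_of_nonneg_left hvB hm)
    positivity
  have h2 : c/ε2*(m*v) ≤ m*F/ε2 := by
    rw [div_mul_eq_mul_div, div_le_div_iff₀ hε2 hε2]
    nlinarith [mul_le_mul_of_nonneg_right (mul_le_mul_of_nonneg_left hF hm) hε2.le]
  linarith

lemma step1_aux (vs0 v1 X : ℝ) (h : vs0 ≤ v1*X + vs0*X) (hX : X ≤ 1/2) (hXpos : 0 < X)
    (hv1 : 0 ≤ v1) (hvs0 : 0 ≤ vs0) : vs0 ≤ 2*v1*X := by nlinarith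

lemma caseB_aux (v1 El2 E14 : ℝ) (hv1 : 0 ≤ v1) (hEl2 : El2 ≤ 1/2) (hE14 : 0 < E14)
    (hEl2pos : 0 < El2) : 2*v1*El2*E14 ≤ v1*E14 := by
  have h2v1 : (0:ℝ) ≤ 2*v1 := by linarith
  nlinarith [mul_le_mul_of_nonneg_right (mul_le_mul_of_nonneg_left hEl2 h2v1) hE14.le]

lemma caseA_aux (v1 El2 E2s E8 : ℝ) (hv1 : 0 ≤ v1) (h2 : El2 ≤ E8) (h3 : E2s ≤ 1/2)
    (hE2s : 0 < E2s) (hE8 : 0 < E8) (hEl2 : 0 < El2) : 2*v1*El2*E2s ≤ v1*E8 := by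
  nlinarith [mul_le_mul h2 h3 hE2s.le hE8.le,
    mul_le_mul_of_nonneg_left (mul_le_mul h2 h3 hE2s.le hE8.le) hv1]

set_option maxHeartbeats 2000000 in
/-- interior exponential estimate `0 ≤ u_ε(s) − θ₀ ≤ 2(u_ε(1) − θ₀) e^{−(M*/ε)(1−s)}`. -/
theorem stmt_14 (N : ℕ) (hN : 2 ≤ N) (τ θ₀ kstar : ℝ) (hτ : τ ∈ Set.Ioo (0:ℝ) 1)
    (f e a b : ℝ → ℝ) (hf : A1 τ θ₀ f) (he : A2 τ e) (hab : A3 N τ kstar a b) :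
    ∃ εs > 0, ∃ Ms > 0, ∀ ε : ℝ, ε ∈ Set.Ioo 0 εs → ∀ u u' : ℝ → ℝ,
      IsSolE N f e a b θ₀ ε u u' → ∀ s ∈ Set.Icc (0:ℝ) 1,
        0 ≤ u s - θ₀ ∧
        u s - θ₀ ≤ 2 * (u 1 - θ₀) * Real.exp (-(Ms / ε) * (1 - s)) := by
  
  classical
  obtain ⟨hf1, -, ⟨c, hc0, hc⟩, hfθ⟩ := hf
  obtain ⟨ha2, hb1, -, -, ⟨Mb, hMb⟩, ⟨cab, hcab0, hcab⟩, -, hkmem, ⟨L, hL0, htend⟩⟩ := hab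
  have hdiffa : Differentiable ℝ a := ha2.differentiable (by norm_num)
  have hca : Continuous (deriv a) := ha2.continuous_deriv (by norm_num)
  have hcb : Continuous (deriv b) := hb1.continuous_deriv le_rfl
  have hcaa : Continuous (deriv (deriv a)) := by
    have h2 : ContDiff ℝ ((1 + 1 : ℕ) : WithTop ℕ∞) a := by
      have : ((1 + 1 : ℕ) : WithTop ℕ∞) = 2 := by norm_num
      rw [this]; exact ha2
    have h3 := ContDiff.iterate_deriv' 1 1 h2
    rw [Function.iterate_one] at h3
    exact h3.continuous_deriv le_rfl
  obtain ⟨R₀, hR₀1, haD⟩ := aprime_bound a b kstar L hkmem hca hcb hcaa htend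
  have hfd : Differentiable ℝ f := hf1.differentiable (by norm_num)
  have hmonog : Monotone (fun t => f t - c * t) := by
    apply monotone_of_deriv_nonneg
    · exact hfd.sub (differentiable_id.const_mul c)
    · intro x
      have h : HasDerivAt (fun t => f t - c * t) (deriv f x - c) x :=
        ((hfd x).hasDerivAt).sub (by simpa using (hasDerivAt_id x).const_mul c)
      rw [h.deriv]
      linarith [hc x]
  have hflb : ∀ t : ℝ, θ₀ ≤ t → c * (t - θ₀) ≤ f t := by
    intro t ht
    have h := hmonog ht
    simp only [hfθ] at h
    linarith
  set amax := max Mb 1 with hamaxdef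
  have hamax1 : (1:ℝ) ≤ amax := le_max_right _ _
  have hamaxa : ∀ r : ℝ, 0 ≤ r → a r ≤ amax := fun r hr => le_trans (hMb r hr).1 (le_max_left _ _)
  have hN1 : (1:ℝ) ≤ (N:ℝ) - 1 := by
    have : (2:ℝ) ≤ (N:ℝ) := by exact_mod_cast hN
    linarith
  set C₁ := ((N:ℝ) - 1) * amax + (L + 1) + amax with hC₁def
  have hC₁pos : 0 < C₁ := by nlinarith
  set M := min 1 (c * cab / C₁) with hMdef
  have hMpos : 0 < M := lt_min one_pos (div_pos (mul_pos hc0 hcab0) hC₁pos)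
  have hM1 : M ≤ 1 := min_le_left _ _
  have hMC : M * C₁ ≤ c * cab := by
    have h1 : M ≤ c * cab / C₁ := min_le_right _ _
    calc M * C₁ ≤ (c * cab / C₁) * C₁ := mul_le_mul_of_nonneg_right h1 hC₁pos.le
    _ = c * cab := by field_simp
  have hlog2 : 0 < Real.log 2 := Real.log_pos one_lt_two
  have hKpos : (0:ℝ) < R₀ := lt_of_lt_of_le one_pos hR₀1
  refine ⟨min (1/(2*R₀)) (M/(4*Real.log 2)), by positivity, M/8, by positivity, ?_⟩
  rintro ε ⟨hε0, hεs⟩ u u' hsol s hs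
  obtain ⟨hucont, hud, hu'c, -, hode, hu'0, hbcond, hpos⟩ := hsol
  have hεne : ε ≠ 0 := ne_of_gt hε0
  have hεK : ε < 1/(2*R₀) := lt_of_lt_of_le hεs (min_le_left _ _)
  have hεM : ε < M/(4*Real.log 2) := lt_of_lt_of_le hεs (min_le_right _ _)
  set s₀ := R₀ * ε with hs₀def
  have hs₀pos : 0 < s₀ := mul_pos hKpos hε0
  have hs₀half : s₀ < 1/2 := by
    rw [hs₀def]
    calc R₀ * ε < R₀ * (1/(2*R₀)) := by exact mul_lt_mul_of_pos_left hεK hKpos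
    _ = 1/2 := by field_simp
  have hs₀1 : s₀ < 1 := by linarith
  set μ := M / ε with hμdef
  have hμpos : 0 < μ := div_pos hMpos hε0
  have hμ4 : Real.log 2 ≤ μ / 4 := by
    rw [hμdef]
    exact mu4_aux M ε (Real.log 2) hε0 hlog2 hεM
  have hEmono : ∀ p q : ℝ, p ≤ q → Real.exp (-(μ*q)) ≤ Real.exp (-(μ*p)) :=
    fun p q h => emono_aux μ p q hμpos h
  have hEhalf : Real.exp (-(μ*(1/4))) ≤ 1/2 := ehalf_aux μ hμ4
  have hmono : MonotoneOn u (Set.Icc (0:ℝ) 1) := by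
    apply monotoneOn_of_deriv_nonneg (convex_Icc 0 1) hucont
    · intro x hx
      rw [interior_Icc] at hx
      exact ((hud x ⟨hx.1, hx.2.le⟩).hasDerivAt
        (Icc_mem_nhds hx.1 hx.2)).differentiableAt.differentiableWithinAt
    · intro x hx
      rw [interior_Icc] at hx
      rw [((hud x ⟨hx.1, hx.2.le⟩).hasDerivAt (Icc_mem_nhds hx.1 hx.2)).deriv]
      exact (hpos x ⟨hx.1.le, hx.2.le⟩).2
  refine ⟨sub_nonneg.2 (hpos s hs).1, ?_⟩
  set v1 := u 1 - θ₀ with hv1def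
  set vs0 := u s₀ - θ₀ with hvs0def
  have hv1 : 0 ≤ v1 := sub_nonneg.2 (hpos 1 ⟨by norm_num, le_rfl⟩).1
  have hvs0 : 0 ≤ vs0 := sub_nonneg.2 (hpos s₀ ⟨hs₀pos.le, hs₀1.le⟩).1
  set Bf : ℝ → ℝ := fun y => v1 * Real.exp (-(μ*(1-y))) + vs0 * Real.exp (-(μ*(y-s₀))) with hBdef
  set B'f : ℝ → ℝ := fun y =>
    v1 * (μ * Real.exp (-(μ*(1-y)))) - vs0 * (μ * Real.exp (-(μ*(y-s₀)))) with hB'def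
  set ρf : ℝ → ℝ := fun y => y^(N-1) * a (y/ε) with hρdef
  set ρ'f : ℝ → ℝ := fun y =>
    ((N:ℝ)-1) * y^(N-2) * a (y/ε) + y^(N-1) * (deriv a (y/ε) * (1/ε)) with hρ'def
  set mf : ℝ → ℝ := fun y => y^(N-1) * b (y/ε) with hmdef
  set W'f : ℝ → ℝ := fun y =>
    mf y * f (u y) / ε^2 - (ρ'f y * B'f y + ρf y * (μ^2 * Bf y)) with hW'def
  -- derivative facts
  have hexp1 : ∀ y : ℝ, HasDerivAt (fun t : ℝ => Real.exp (-(μ*(1-t))))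
      (Real.exp (-(μ*(1-y))) * μ) y := by
    intro y
    have h : HasDerivAt (fun t : ℝ => -(μ*(1-t))) μ y := by
      have := (((hasDerivAt_id y).const_sub 1).const_mul μ).neg
      exact this.congr_deriv (by ring)
    exact h.exp
  have hexp2 : ∀ y : ℝ, HasDerivAt (fun t : ℝ => Real.exp (-(μ*(t-s₀))))
      (Real.exp (-(μ*(y-s₀))) * (-μ)) y := by
    intro y
    have h : HasDerivAt (fun t : ℝ => -(μ*(t-s₀))) (-μ) y := by
      have := (((hasDerivAt_id y).sub_const s₀).const_mul μ).neg
      exact this.congr_deriv (by ring)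
    exact h.exp
  have hBder : ∀ y : ℝ, HasDerivAt Bf (B'f y) y := by
    intro y
    rw [hBdef, hB'def]
    have h := ((hexp1 y).const_mul v1).add ((hexp2 y).const_mul vs0)
    refine h.congr_deriv (Eq.symm ?_)
    ring
  have hB'der : ∀ y : ℝ, HasDerivAt B'f (μ^2 * Bf y) y := by
    intro y
    rw [hB'def, hBdef]
    have h := (((hexp1 y).const_mul μ).const_mul v1).sub (((hexp2 y).const_mul μ).const_mul vs0)
    refine h.congr_deriv (Eq.symm ?_)
    ring
  have haderAt : ∀ y : ℝ, HasDerivAt (fun t : ℝ => a (t/ε)) (deriv a (y/ε) * (1/ε)) y := by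
    intro y
    have h1 : HasDerivAt (fun t : ℝ => t / ε) (1/ε) y := by
      simpa using (hasDerivAt_id y).div_const ε
    exact ((hdiffa (y/ε)).hasDerivAt).comp y h1
  have hρderAt : ∀ y : ℝ, HasDerivAt ρf (ρ'f y) y := by
    intro y
    rw [hρdef, hρ'def]
    have h := (hasDerivAt_pow (N-1) y).mul (haderAt y)
    refine h.congr_deriv (Eq.symm ?_)
    have h1 : ((N-1 : ℕ) : ℝ) = (N:ℝ) - 1 := by
      rw [Nat.cast_sub (by omega : 1 ≤ N), Nat.cast_one]
    have h2 : N - 1 - 1 = N - 2 := by omega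
    rw [h1, h2]
  have hBcont : Continuous Bf := by
    rw [hBdef]
    fun_prop
  -- the comparison
  have hstar0 : ∀ x ∈ Set.Icc s₀ 1, u x - θ₀ - Bf x ≤ 0 := by
    apply maxprin s₀ hs₀1 (fun y => u y - θ₀ - Bf y) (fun y => u' y - B'f y) ρf W'f
    · exact ((hucont.mono (Set.Icc_subset_Icc hs₀pos.le le_rfl)).sub continuousOn_const).sub
        hBcont.continuousOn
    · intro x hx
      have hxI : x ∈ Set.Ioo (0:ℝ) 1 := ⟨lt_trans hs₀pos hx.1, hx.2⟩
      exact (((hud x ⟨hxI.1, hxI.2.le⟩).hasDerivAt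
        (Icc_mem_nhds hxI.1 hxI.2)).sub_const θ₀).sub (hBder x)
    · intro x hx
      have hxI : x ∈ Set.Ioo (0:ℝ) 1 := ⟨lt_trans hs₀pos hx.1, hx.2⟩
      obtain ⟨d, hdd, heq⟩ := hode x hxI
      have hx0 : (0:ℝ) < x := hxI.1
      have hxne : x ≠ 0 := ne_of_gt hx0
      have hA : 0 < a (x/ε) := lt_of_lt_of_le hcab0 (hcab (x/ε) (by positivity)).1
      have hAne : a (x/ε) ≠ 0 := ne_of_gt hA
      have hader : deriv (fun t : ℝ => a (t/ε)) x = deriv a (x/ε) * (1/ε) := (haderAt x).deriv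
      rw [hader] at heq
      have hpow : x^(N-1) = x^(N-2) * x := by
        rw [← pow_succ]
        congr 1
        omega
      have halg : ρ'f x * u' x + ρf x * d = mf x * f (u x) / ε^2 := by
        simp only [hρ'def, hρdef, hmdef]
        have hd2 : d = b (x/ε)/a (x/ε)*f (u x)/ε^2
            - (((N:ℝ)-1)/x + (deriv a (x/ε)*(1/ε))/a (x/ε))*u' x := by
          have hε2 : (ε:ℝ)^2 ≠ 0 := pow_ne_zero 2 hεne
          field_simp at heq ⊢
          linarith
        rw [hd2, hpow]
        field_simp
        ring
      have h := (hρderAt x).mul (hdd.sub (hB'der x))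
      refine h.congr_deriv (Eq.symm ?_)
      simp only [hW'def, Pi.sub_apply]
      linear_combination -halg
    · intro x hx
      have hx0 : (0:ℝ) < x := lt_trans hs₀pos hx.1
      have hA : 0 < a (x/ε) := lt_of_lt_of_le hcab0 (hcab (x/ε) (by positivity)).1
      simp only [hρdef]
      exact mul_pos (pow_pos hx0 _) hA
    · -- key inequality
      intro x hx hwx
      have hx0 : (0:ℝ) < x := lt_trans hs₀pos hx.1
      have hx1 : x < 1 := hx.2
      have hxs₀ : s₀ ≤ x := hx.1.le
      have hA : 0 < a (x/ε) := lt_of_lt_of_le hcab0 (hcab (x/ε) (by positivity)).1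
      have hAup : a (x/ε) ≤ amax := hamaxa _ (by positivity)
      have hbx : cab ≤ b (x/ε) := (hcab (x/ε) (by positivity)).2
      have hpw1 : (0:ℝ) < x^(N-1) := pow_pos hx0 _
      have hpw2 : (0:ℝ) < x^(N-2) := pow_pos hx0 _
      have hpow : x^(N-1) = x^(N-2) * x := by
        rw [← pow_succ]
        congr 1
        omega
      have hrK : R₀ ≤ x/ε := by
        rw [le_div_iff₀ hε0]
        linarith [hxs₀, hs₀def]
      have hA'bd : |deriv a (x/ε)| ≤ (L+1)/(x/ε) := haD _ hrK
      have hA'bd2 : |deriv a (x/ε)| * (1/ε) ≤ (L+1)/x := by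
        have he : (L+1)/(x/ε) * (1/ε) = (L+1)/x := by
          field_simp
        calc |deriv a (x/ε)| * (1/ε) ≤ (L+1)/(x/ε) * (1/ε) :=
          mul_le_mul_of_nonneg_right hA'bd (by positivity)
        _ = (L+1)/x := he
      have habsρ' : |ρ'f x| ≤ ((N:ℝ)-1)*x^(N-2)*amax + x^(N-2)*(L+1) := by
        simp only [hρ'def]
        have t1 : |((N:ℝ)-1)*x^(N-2)*a (x/ε)| = ((N:ℝ)-1)*x^(N-2)*a (x/ε) :=
          abs_of_nonneg (mul_nonneg (mul_nonneg (by linarith) hpw2.le) hA.le)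
        have t2 : ((N:ℝ)-1)*x^(N-2)*a (x/ε) ≤ ((N:ℝ)-1)*x^(N-2)*amax :=
          mul_le_mul_of_nonneg_left hAup (mul_nonneg (by linarith) hpw2.le)
        have t3 : |x^(N-1)*(deriv a (x/ε)*(1/ε))| = x^(N-1)*(|deriv a (x/ε)| * (1/ε)) := by
          rw [abs_mul, abs_mul, abs_of_nonneg hpw1.le,
            abs_of_nonneg (by positivity : (0:ℝ) ≤ 1/ε)]
        have t4 : x^(N-1)*(|deriv a (x/ε)| * (1/ε)) ≤ x^(N-1)*((L+1)/x) :=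
          mul_le_mul_of_nonneg_left hA'bd2 hpw1.le
        have t5 : x^(N-1)*((L+1)/x) = x^(N-2)*(L+1) := by
          rw [hpow]
          field_simp
        calc |((N:ℝ)-1)*x^(N-2)*a (x/ε) + x^(N-1)*(deriv a (x/ε)*(1/ε))|
            ≤ |((N:ℝ)-1)*x^(N-2)*a (x/ε)| + |x^(N-1)*(deriv a (x/ε)*(1/ε))| := abs_add_le _ _
        _ ≤ ((N:ℝ)-1)*x^(N-2)*amax + x^(N-2)*(L+1) := by
            rw [t1, t3]
            linarith [le_trans t4 (le_of_eq t5)]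
      have hεx : ε ≤ x := by
        have h1 : (1:ℝ)*ε ≤ R₀*ε := mul_le_mul_of_nonneg_right hR₀1 hε0.le
        rw [hs₀def] at hxs₀
        linarith
      have hKCI : ε*M*|ρ'f x| + M^2*(ρf x) ≤ c*(mf x) := by
        simp only [hρdef, hmdef]
        have h1 : ε*x^(N-2) ≤ x^(N-1) := by
          rw [hpow]
          have := mul_le_mul_of_nonneg_left hεx hpw2.le
          linarith
        have e2 : ε*M*|ρ'f x| ≤ ε*M*(((N:ℝ)-1)*x^(N-2)*amax + x^(N-2)*(L+1)) :=
          mul_le_mul_of_nonneg_left habsρ' (by positivity)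
        have e3 : ε*M*(((N:ℝ)-1)*x^(N-2)*amax + x^(N-2)*(L+1))
            = M*(((N:ℝ)-1)*amax+(L+1))*(ε*x^(N-2)) := by ring
        have e4 : M*(((N:ℝ)-1)*amax+(L+1))*(ε*x^(N-2))
            ≤ M*(((N:ℝ)-1)*amax+(L+1))*x^(N-1) := by
          apply mul_le_mul_of_nonneg_left h1
          have h9 : (0:ℝ) ≤ ((N:ℝ)-1)*amax := mul_nonneg (by linarith) (by linarith)
          have h10 : (0:ℝ) ≤ ((N:ℝ)-1)*amax + (L+1) := by linarith
          exact mul_nonneg hMpos.le h10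
        have e5 : M^2*(x^(N-1)*a (x/ε)) ≤ M*(amax*x^(N-1)) :=
          e5_aux M (x^(N-1)) (a (x/ε)) amax hMpos hM1 hpw1 hA hAup
        have e6 : M*(((N:ℝ)-1)*amax+(L+1))*x^(N-1) + M*(amax*x^(N-1)) = M*C₁*x^(N-1) := by
          rw [hC₁def]
          ring
        have e7 : M*C₁*x^(N-1) ≤ c*cab*x^(N-1) := mul_le_mul_of_nonneg_right hMC hpw1.le
        have e8 : c*cab*x^(N-1) ≤ c*(x^(N-1)*b (x/ε)) :=
          e8_aux c cab (x^(N-1)) (b (x/ε)) hc0 hpw1 hbx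
        linarith
      -- supersolution estimate
      have hE1pos := Real.exp_pos (-(μ*(1-x)))
      have hE2pos := Real.exp_pos (-(μ*(x-s₀)))
      have hBnn : 0 ≤ Bf x := by
        simp only [hBdef]
        exact add_nonneg (mul_nonneg hv1 hE1pos.le) (mul_nonneg hvs0 hE2pos.le)
      have hB'abs : |B'f x| ≤ μ * Bf x := by
        simp only [hB'def, hBdef]
        have := babs_aux v1 vs0 μ (Real.exp (-(μ*(1-x)))) (Real.exp (-(μ*(x-s₀))))
          hv1 hvs0 hμpos hE1pos hE2pos
        calc |v1 * (μ * Real.exp (-(μ*(1-x)))) - vs0 * (μ * Real.exp (-(μ*(x-s₀))))|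
            ≤ μ*(v1 * Real.exp (-(μ*(1-x))) + vs0 * Real.exp (-(μ*(x-s₀)))) := this
        _ = μ*(v1 * Real.exp (-(μ*(1-x))) + vs0 * Real.exp (-(μ*(x-s₀)))) := rfl
      have hρnn : 0 ≤ ρf x := by
        simp only [hρdef]
        positivity
      have hmnn : 0 ≤ mf x := by
        simp only [hmdef]
        exact mul_nonneg hpw1.le (lt_of_lt_of_le hcab0 hbx).le
      have hsup : ρ'f x * B'f x + ρf x * (μ^2 * Bf x) ≤ c/ε^2 * (mf x * Bf x) := by
        have h1 : ρ'f x * B'f x ≤ |ρ'f x| * (μ * Bf x) := by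
          calc ρ'f x * B'f x ≤ |ρ'f x * B'f x| := le_abs_self _
          _ = |ρ'f x| * |B'f x| := abs_mul _ _
          _ ≤ |ρ'f x| * (μ * Bf x) := mul_le_mul_of_nonneg_left hB'abs (abs_nonneg _)
        have h2 : |ρ'f x| * (μ * Bf x) + ρf x * (μ^2 * Bf x)
            = (Bf x/ε^2) * (ε*M*|ρ'f x| + M^2*(ρf x)) := by
          rw [hμdef]
          field_simp
        have h3 : (Bf x/ε^2) * (ε*M*|ρ'f x| + M^2*(ρf x)) ≤ (Bf x/ε^2) * (c*(mf x)) :=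
          mul_le_mul_of_nonneg_left hKCI (by positivity)
        have h4 : (Bf x/ε^2) * (c*(mf x)) = c/ε^2 * (mf x * Bf x) := by ring
        calc ρ'f x * B'f x + ρf x * (μ^2 * Bf x)
            ≤ |ρ'f x| * (μ * Bf x) + ρf x * (μ^2 * Bf x) := add_le_add_left h1 _
        _ = (Bf x/ε^2) * (ε*M*|ρ'f x| + M^2*(ρf x)) := h2
        _ ≤ (Bf x/ε^2) * (c*(mf x)) := h3
        _ = c/ε^2 * (mf x * Bf x) := h4
      have hfux : c*(u x - θ₀) ≤ f (u x) := hflb _ (hpos x ⟨hx0.le, hx1.le⟩).1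
      have hBle : Bf x ≤ u x - θ₀ := by linarith
      simp only [hW'def]
      exact keyfinal_aux c (ε^2) (mf x) (f (u x)) (u x - θ₀) (Bf x)
        (ρ'f x * B'f x + ρf x * (μ^2 * Bf x)) hmnn hc0 (by positivity) hsup hfux hBle
    · -- boundary at s₀
      simp only [hBdef]
      have : s₀ - s₀ = (0:ℝ) := by ring
      rw [this]
      simp only [mul_zero, neg_zero, Real.exp_zero, mul_one]
      rw [← hvs0def]
      have h9 : 0 ≤ v1 * Real.exp (-(μ*(1-s₀))) :=
        mul_nonneg hv1 (Real.exp_pos (-(μ*(1-s₀)))).le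
      linarith
    · -- boundary at 1
      simp only [hBdef]
      have : (1:ℝ) - 1 = (0:ℝ) := by ring
      rw [this]
      simp only [mul_zero, neg_zero, Real.exp_zero, mul_one]
      rw [← hv1def]
      have h9 : 0 ≤ vs0 * Real.exp (-(μ*(1-s₀))) :=
        mul_nonneg hvs0 (Real.exp_pos (-(μ*(1-s₀)))).le
      linarith
  have hstar : ∀ t ∈ Set.Icc s₀ 1, u t - θ₀ ≤ Bf t := by
    intro t ht
    have h := hstar0 t ht
    linarith
  -- Step 1 : vs0 ≤ 2 v1 exp(-(μ (1-s₀)/2))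
  have hmidmem : (s₀+1)/2 ∈ Set.Icc s₀ 1 := ⟨by linarith, by linarith⟩
  have hstep1 : vs0 ≤ 2*v1*Real.exp (-(μ*((1-s₀)/2))) := by
    have h1 := hstar _ hmidmem
    simp only [hBdef] at h1
    have e1 : 1 - (s₀+1)/2 = (1-s₀)/2 := by ring
    have e2 : (s₀+1)/2 - s₀ = (1-s₀)/2 := by ring
    rw [e1, e2] at h1
    have humid : vs0 ≤ u ((s₀+1)/2) - θ₀ := by
      have := hmono ⟨hs₀pos.le, hs₀1.le⟩ ⟨by linarith, hmidmem.2⟩ hmidmem.1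
      rw [hvs0def]
      linarith
    have hEl2 : Real.exp (-(μ*((1-s₀)/2))) ≤ 1/2 :=
      le_trans (hEmono _ _ (by linarith)) hEhalf
    have hvsX : vs0 ≤ v1*Real.exp (-(μ*((1-s₀)/2))) + vs0*Real.exp (-(μ*((1-s₀)/2))) := by
      linarith
    exact step1_aux vs0 v1 _ hvsX hEl2 (Real.exp_pos _) hv1 hvs0
  -- final assembly
  have hexp_eq : Real.exp (-(M/8/ε)*(1-s)) = Real.exp (-(μ*((1-s)/8))) := by
    have harg : -(M/8/ε)*(1-s) = -(μ*((1-s)/8)) := by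
      rw [hμdef]
      ring
    rw [harg]
  rw [hexp_eq]
  have hs0 : (0:ℝ) ≤ s := hs.1
  have hs1 : s ≤ 1 := hs.2
  have hEl2 : Real.exp (-(μ*((1-s₀)/2))) ≤ 1/2 :=
    le_trans (hEmono _ _ (by linarith)) hEhalf
  have hE8pos := Real.exp_pos (-(μ*((1-s)/8)))
  rcases le_total s (s₀ + 1/4) with hcase | hcase
  · -- s ≤ s₀ + 1/4
    have hσmem : s₀ + 1/4 ∈ Set.Icc s₀ 1 := ⟨by linarith, by linarith⟩
    have h2 := hstar _ hσmem
    simp only [hBdef] at h2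
    have e3 : s₀ + 1/4 - s₀ = (1/4 : ℝ) := by ring
    rw [e3] at h2
    have hus : u s ≤ u (s₀+1/4) := hmono hs ⟨by linarith, hσmem.2⟩ hcase
    have hb1' : Real.exp (-(μ*(1-(s₀+1/4)))) ≤ Real.exp (-(μ*((1-s)/8))) :=
      hEmono _ _ (by linarith)
    have hb3' : Real.exp (-(μ*(1/4))) ≤ Real.exp (-(μ*((1-s)/8))) :=
      hEmono _ _ (by linarith)
    have hE14pos := Real.exp_pos (-(μ*(1/4)))
    have c1 : vs0 * Real.exp (-(μ*(1/4)))
        ≤ 2*v1*Real.exp (-(μ*((1-s₀)/2))) * Real.exp (-(μ*(1/4))) :=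
      mul_le_mul_of_nonneg_right hstep1 hE14pos.le
    have c2 : 2*v1*Real.exp (-(μ*((1-s₀)/2))) * Real.exp (-(μ*(1/4)))
        ≤ v1 * Real.exp (-(μ*(1/4))) :=
      caseB_aux v1 _ _ hv1 hEl2 hE14pos (Real.exp_pos _)
    have c3 : v1 * Real.exp (-(μ*(1/4))) ≤ v1 * Real.exp (-(μ*((1-s)/8))) :=
      mul_le_mul_of_nonneg_left hb3' hv1
    have c4 : v1 * Real.exp (-(μ*(1-(s₀+1/4)))) ≤ v1 * Real.exp (-(μ*((1-s)/8))) :=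
      mul_le_mul_of_nonneg_left hb1' hv1
    linarith
  · -- s₀ + 1/4 ≤ s
    have hsmem : s ∈ Set.Icc s₀ 1 := ⟨by linarith, hs1⟩
    have h2 := hstar s hsmem
    simp only [hBdef] at h2
    have hE1s := Real.exp_pos (-(μ*(1-s)))
    have hE2s := Real.exp_pos (-(μ*(s-s₀)))
    have hEl2pos := Real.exp_pos (-(μ*((1-s₀)/2)))
    have d1 : Real.exp (-(μ*(1-s))) ≤ Real.exp (-(μ*((1-s)/8))) :=
      hEmono _ _ (by linarith)
    have d2 : Real.exp (-(μ*((1-s₀)/2))) ≤ Real.exp (-(μ*((1-s)/8))) :=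
      hEmono _ _ (by linarith)
    have d3 : Real.exp (-(μ*(s-s₀))) ≤ 1/2 :=
      le_trans (hEmono _ _ (by linarith)) hEhalf
    have c1 : vs0 * Real.exp (-(μ*(s-s₀)))
        ≤ 2*v1*Real.exp (-(μ*((1-s₀)/2))) * Real.exp (-(μ*(s-s₀))) :=
      mul_le_mul_of_nonneg_right hstep1 hE2s.le
    have c2 : 2*v1*Real.exp (-(μ*((1-s₀)/2))) * Real.exp (-(μ*(s-s₀)))
        ≤ v1 * Real.exp (-(μ*((1-s)/8))) :=
      caseA_aux v1 _ _ _ hv1 d2 d3 hE2s hE8pos hEl2pos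
    have c3 : v1 * Real.exp (-(μ*(1-s))) ≤ v1 * Real.exp (-(μ*((1-s)/8))) :=
      mul_le_mul_of_nonneg_left d1 hv1
    have hfinal : u s - θ₀ ≤ v1 * Real.exp (-(μ*((1-s)/8))) + v1 * Real.exp (-(μ*((1-s)/8))) :=
      le_trans h2 (add_le_add c3 (le_trans c1 c2))
    calc u s - θ₀ ≤ v1 * Real.exp (-(μ*((1-s)/8))) + v1 * Real.exp (-(μ*((1-s)/8))) := hfinal
    _ = 2 * v1 * Real.exp (-(μ*((1-s)/8))) := by ring
end
end

section
/- There exist ε* > 0 and M* > 0, independent of ε, such that for all ε ∈ (0, ε*) and all s ∈ [0,1], 0 ≤ s^{N−1} α_ε(s) u_ε'(s) ≤ (2/ε) α_ε(1) e(θ₀) e^{−(M*/ε)(1−s)}. -/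
open Filter Set MeasureTheory

noncomputable section

lemma monoAux {F : ℝ → ℝ}
    (hd : ∀ s ∈ Set.Ioo (0:ℝ) 1, ∃ d, 0 ≤ d ∧ HasDerivAt F d s)
    {x y : ℝ} (hx : 0 < x) (hxy : x ≤ y) (hy : y < 1) : F x ≤ F y := by
  choose d hd0 hdd using hd
  have hsub : Set.Icc x y ⊆ Set.Ioo 0 1 := fun t ht =>
    ⟨lt_of_lt_of_le hx ht.1, lt_of_le_of_lt ht.2 hy⟩
  have hcont : ContinuousOn F (Set.Icc x y) := fun t ht =>
    ((hdd t (hsub ht)).continuousAt).continuousWithinAt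
  have hdiff : DifferentiableOn ℝ F (interior (Set.Icc x y)) := fun t ht =>
    ((hdd t (hsub (interior_subset ht))).differentiableAt).differentiableWithinAt
  have hm : MonotoneOn F (Set.Icc x y) :=
    monotoneOn_of_deriv_nonneg (convex_Icc x y) hcont hdiff (fun t ht => by
      rw [(hdd t (hsub (interior_subset ht))).deriv]
      exact hd0 t (hsub (interior_subset ht)))
  exact hm ⟨le_rfl, hxy⟩ ⟨hxy, le_rfl⟩ hxy

lemma derivNonnegAux {P : ℝ → ℝ} {p s : ℝ} (hs : 0 < s)
    (hm : ∀ x y : ℝ, 0 < x → x ≤ y → P x ≤ P y) (hP : HasDerivAt P p s) : 0 ≤ p := by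
  have h1 : Tendsto (slope P s) (nhdsWithin s (Set.Ioi s)) (nhds p) :=
    (hasDerivAt_iff_tendsto_slope.mp hP).mono_left
      (nhdsWithin_mono _ fun x hx => ne_of_gt hx)
  refine ge_of_tendsto h1 ?_
  filter_upwards [self_mem_nhdsWithin] with t ht
  rw [slope_def_field]
  exact div_nonneg (sub_nonneg.2 (hm s t hs (le_of_lt ht))) (sub_nonneg.2 (le_of_lt ht))

set_option maxHeartbeats 2000000 in
/-- gradient estimate `0 ≤ s^{N−1} α_ε(s) u_ε'(s) ≤ (2/ε) α_ε(1) e(θ₀) e^{−(M*/ε)(1−s)}`. -/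
theorem stmt_15 (N : ℕ) (hN : 2 ≤ N) (τ θ₀ kstar : ℝ) (hτ : τ ∈ Set.Ioo (0:ℝ) 1)
    (f e a b : ℝ → ℝ) (hf : A1 τ θ₀ f) (he : A2 τ e) (hab : A3 N τ kstar a b) :
    ∃ εs > 0, ∃ Ms > 0, ∀ ε : ℝ, ε ∈ Set.Ioo 0 εs → ∀ u u' : ℝ → ℝ,
      IsSolE N f e a b θ₀ ε u u' → ∀ s ∈ Set.Icc (0:ℝ) 1,
        0 ≤ s ^ (N - 1) * a (s / ε) * u' s ∧
        s ^ (N - 1) * a (s / ε) * u' s ≤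
          (2 / ε) * a (1 / ε) * e θ₀ * Real.exp (-(Ms / ε) * (1 - s)) := by
  obtain ⟨hf1, -, ⟨c, hc, hcf⟩, hfθ⟩ := hf
  obtain ⟨-, -, heAnti, hePos⟩ := he
  obtain ⟨ha2, hb1, -, -, ⟨M, hM⟩, ⟨c₀, hc₀, hab0⟩, hmono, -, -⟩ := hab
  obtain ⟨m, rfl⟩ : ∃ m, N = m + 2 := ⟨N - 2, by omega⟩
  have hexp_eq : m + 2 - 1 = m + 1 := rfl
  simp only [hexp_eq] at hmono ⊢
  have hMpos : 0 < M := lt_of_lt_of_le hc₀ (le_trans (hab0 0 le_rfl).1 (hM 0 le_rfl).1)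
  set κ : ℝ := c * c₀ / M with hκdef
  have hκ : 0 < κ := by positivity
  have hfmono : StrictMono f := strictMono_of_deriv_pos fun x => lt_of_lt_of_le hc (hcf x)
  have hfdiff : Differentiable ℝ f := hf1.differentiable one_ne_zero
  have hadiff : Differentiable ℝ a := ha2.differentiable two_ne_zero
  have hbdiff : Differentiable ℝ b := hb1.differentiable one_ne_zero
  refine ⟨1, one_pos, Real.sqrt κ, Real.sqrt_pos.2 hκ, ?_⟩
  rintro ε ⟨hε, hε1⟩ u u' ⟨hu_cont, hu_deriv, hu'_cont, -, heqn, hu'zero, hbc, hrec⟩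
  set lam : ℝ := Real.sqrt κ / ε with hlamdef
  have hlam : 0 < lam := div_pos (Real.sqrt_pos.2 hκ) hε
  have hlam2 : lam * lam = κ / ε ^ 2 := by
    rw [hlamdef, div_mul_div_comm, Real.mul_self_sqrt hκ.le, sq]
  set g : ℝ → ℝ := fun s => s ^ (m + 1) * a (s / ε) * u' s with hgdef
  set h : ℝ → ℝ := fun s => s ^ (m + 1) * b (s / ε) * f (u s) with hhdef
  have haL : ∀ s : ℝ, 0 ≤ s → c₀ ≤ a (s/ε) ∧ a (s/ε) ≤ M := fun s hs =>
    ⟨(hab0 _ (div_nonneg hs hε.le)).1, (hM _ (div_nonneg hs hε.le)).1⟩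
  have hbL : ∀ s : ℝ, 0 ≤ s → c₀ ≤ b (s/ε) ∧ b (s/ε) ≤ M := fun s hs =>
    ⟨(hab0 _ (div_nonneg hs hε.le)).2, (hM _ (div_nonneg hs hε.le)).2⟩
  have hfu : ∀ s ∈ Set.Icc (0:ℝ) 1, 0 ≤ f (u s) := fun s hs => by
    rw [← hfθ]; exact hfmono.monotone (hrec s hs).1
  have hgnn : ∀ s ∈ Set.Icc (0:ℝ) 1, 0 ≤ g s := fun s hs =>
    mul_nonneg (mul_nonneg (pow_nonneg hs.1 _) (le_trans hc₀.le (haL s hs.1).1)) (hrec s hs).2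
  have hhnn : ∀ s ∈ Set.Icc (0:ℝ) 1, 0 ≤ h s := fun s hs =>
    mul_nonneg (mul_nonneg (pow_nonneg hs.1 _) (le_trans hc₀.le (hbL s hs.1).1)) (hfu s hs)
  have hUdAt : ∀ s ∈ Set.Ioo (0:ℝ) 1, HasDerivAt u (u' s) s := fun s hs =>
    (hu_deriv s ⟨hs.1, hs.2.le⟩).hasDerivAt (Icc_mem_nhds hs.1 hs.2)
  have hαd : ∀ s : ℝ, HasDerivAt (fun t : ℝ => a (t / ε)) (deriv a (s/ε) * (1/ε)) s := fun s => by
    have h1 : HasDerivAt (fun t : ℝ => t / ε) (1/ε) s := (hasDerivAt_id s).div_const ε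
    exact ((hadiff (s/ε)).hasDerivAt).comp s h1
  have hβd : ∀ s : ℝ, HasDerivAt (fun t : ℝ => b (t / ε)) (deriv b (s/ε) * (1/ε)) s := fun s => by
    have h1 : HasDerivAt (fun t : ℝ => t / ε) (1/ε) s := (hasDerivAt_id s).div_const ε
    exact ((hbdiff (s/ε)).hasDerivAt).comp s h1
  -- Step 1: derivative of g
  have hgd : ∀ s ∈ Set.Ioo (0:ℝ) 1, HasDerivAt g (h s / ε ^ 2) s := by
    intro s hs
    obtain ⟨d, hdd, heqs⟩ := heqn s hs
    have hpow : HasDerivAt (fun t : ℝ => t ^ (m+1)) ((m+1 : ℕ) * s ^ m) s := by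
      simpa using hasDerivAt_pow (m+1) s
    have hG : HasDerivAt g
        (((m+1:ℕ) * s ^ m * a (s/ε) + s^(m+1) * (deriv a (s/ε) * (1/ε))) * u' s
          + s^(m+1) * a (s/ε) * d) s := (hpow.mul (hαd s)).mul hdd
    convert hG using 1
    rw [(hαd s).deriv] at heqs
    have hA : a (s/ε) ≠ 0 := ne_of_gt (lt_of_lt_of_le hc₀ (haL s hs.1.le).1)
    have hs0 : s ≠ 0 := ne_of_gt hs.1
    have hε0 : ε ≠ 0 := ne_of_gt hε
    have hε2 : (ε:ℝ)^2 ≠ 0 := pow_ne_zero _ hε0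
    have heqs2 : ε^2 * (d * s * ε * a (s/ε)
        + ((((m:ℝ)+1)) * ε * a (s/ε) + deriv a (s/ε) * s) * u' s)
        = b (s/ε) * f (u s) * s * ε := by
      apply mul_right_cancel₀ hA
      push_cast at heqs
      field_simp at heqs
      linear_combination (ε * a (s/ε)) * heqs
    simp only [hhdef]
    push_cast
    rw [div_eq_iff hε2]
    field_simp
    apply mul_left_cancel₀ hε0
    linear_combination (-(s^m) : ℝ) * heqs2
  -- monotone package for g
  have hgpkg : ∀ s ∈ Set.Ioo (0:ℝ) 1, ∃ d, 0 ≤ d ∧ HasDerivAt g d s := fun s hs =>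
    ⟨h s / ε^2, div_nonneg (hhnn s ⟨hs.1.le, hs.2.le⟩) (sq_nonneg ε), hgd s hs⟩
  -- monotonicity of s ↦ s^(m+1) b(s/ε)
  have hPmono : ∀ x y : ℝ, 0 < x → x ≤ y → x^(m+1) * b (x/ε) ≤ y^(m+1) * b (y/ε) := by
    intro x y hx hxy
    have hy : 0 < y := lt_of_lt_of_le hx hxy
    have key := hmono (div_pos hx hε) (div_pos hy hε)
      (div_le_div_of_nonneg_right hxy hε.le)
    have hεp : (0:ℝ) < ε^(m+1) := pow_pos hε _
    calc x^(m+1) * b (x/ε) = ε^(m+1) * ((x/ε)^(m+1) * b (x/ε)) := by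
          rw [div_pow]; field_simp
    _ ≤ ε^(m+1) * ((y/ε)^(m+1) * b (y/ε)) := mul_le_mul_of_nonneg_left key hεp.le
    _ = y^(m+1) * b (y/ε) := by rw [div_pow]; field_simp
  -- Step 2: derivative of h
  have hhd : ∀ s ∈ Set.Ioo (0:ℝ) 1, ∃ D, HasDerivAt h D s ∧ κ * g s ≤ D := by
    intro s hs
    have hpow : HasDerivAt (fun t : ℝ => t ^ (m+1)) ((m+1 : ℕ) * s ^ m) s := by
      simpa using hasDerivAt_pow (m+1) s
    have hP : HasDerivAt (fun t : ℝ => t ^ (m+1) * b (t/ε))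
        ((m+1:ℕ) * s^m * b (s/ε) + s^(m+1) * (deriv b (s/ε) * (1/ε))) s := hpow.mul (hβd s)
    have hF : HasDerivAt (fun t : ℝ => f (u t)) (deriv f (u s) * u' s) s :=
      ((hfdiff (u s)).hasDerivAt).comp s (hUdAt s hs)
    refine ⟨_, hP.mul hF, ?_⟩
    have hP' : 0 ≤ (m+1:ℕ) * s^m * b (s/ε) + s^(m+1) * (deriv b (s/ε) * (1/ε)) :=
      derivNonnegAux hs.1 hPmono hP
    have hF0 : 0 ≤ f (u s) := hfu s ⟨hs.1.le, hs.2.le⟩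
    have hu's : 0 ≤ u' s := (hrec s ⟨hs.1.le, hs.2.le⟩).2
    have hdf : c ≤ deriv f (u s) := hcf _
    have haM : a (s/ε) ≤ M := (haL s hs.1.le).2
    have hbc₀ : c₀ ≤ b (s/ε) := (hbL s hs.1.le).1
    have hsp : 0 ≤ s ^ (m+1) := pow_nonneg hs.1.le _
    have key : κ * g s ≤ s^(m+1) * b (s/ε) * (deriv f (u s) * u' s) := by
      rw [hκdef, div_mul_eq_mul_div, div_le_iff₀ hMpos]
      have e1 : g s ≤ s^(m+1) * M * u' s := by
        calc g s = s^(m+1) * (a (s/ε) * u' s) := by rw [hgdef]; ring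
        _ ≤ s^(m+1) * (M * u' s) :=
          mul_le_mul_of_nonneg_left (mul_le_mul_of_nonneg_right haM hu's) hsp
        _ = s^(m+1) * M * u' s := by ring
      have hcc : c * c₀ ≤ deriv f (u s) * b (s/ε) :=
        mul_le_mul hdf hbc₀ hc₀.le (hc.le.trans hdf)
      have hg0 : 0 ≤ g s := hgnn s ⟨hs.1.le, hs.2.le⟩
      nlinarith [mul_le_mul hcc e1 hg0 (mul_nonneg (hc.le.trans hdf) (hc₀.le.trans hbc₀))]
    have hT1 : 0 ≤ ((m+1:ℕ) * s^m * b (s/ε) + s^(m+1) * (deriv b (s/ε) * (1/ε))) * f (u s) :=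
      mul_nonneg hP' hF0
    linarith [key, hT1]
  -- z and ψ
  set z : ℝ → ℝ := fun t => h t / ε^2 - lam * g t with hzdef
  set ψ : ℝ → ℝ := fun t => Real.exp (lam * t) * z t with hψdef
  have hψd : ∀ s ∈ Set.Ioo (0:ℝ) 1, ∃ D, 0 ≤ D ∧ HasDerivAt ψ D s := by
    intro s hs
    obtain ⟨D, hD, hκg⟩ := hhd s hs
    have hzd : HasDerivAt z (D / ε^2 - lam * (h s / ε^2)) s :=
      (hD.div_const _).sub ((hgd s hs).const_mul lam)
    have hexp : HasDerivAt (fun t : ℝ => Real.exp (lam * t)) (Real.exp (lam * s) * lam) s := by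
      simpa [Function.comp_def] using (Real.hasDerivAt_exp (lam * s)).comp s ((hasDerivAt_id s).const_mul lam)
    refine ⟨_, ?_, hexp.mul hzd⟩
    have hid : Real.exp (lam*s) * lam * z s + Real.exp (lam*s) * (D/ε^2 - lam*(h s/ε^2))
        = Real.exp (lam*s) * (D/ε^2 - κ/ε^2 * g s) := by
      simp only [hzdef]
      linear_combination (-(Real.exp (lam*s) * g s)) * hlam2
    rw [hid]
    refine mul_nonneg (Real.exp_pos _).le (sub_nonneg.2 ?_)
    rw [div_mul_eq_mul_div]
    exact div_le_div_of_nonneg_right hκg (sq_nonneg ε)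
  -- limits at 0
  have hsubIcc : Set.Ioo (0:ℝ) 2⁻¹ ⊆ Set.Icc (0:ℝ) 1 :=
    fun t ht => ⟨ht.1.le, le_trans ht.2.le (by norm_num)⟩
  have hNB0 : (nhdsWithin (0:ℝ) (Set.Ioo (0:ℝ) 2⁻¹)).NeBot := by
    apply mem_closure_iff_nhdsWithin_neBot.mp
    rw [closure_Ioo (by norm_num : (0:ℝ) ≠ 2⁻¹)]
    exact ⟨le_rfl, by norm_num⟩
  have huat0 : Tendsto u (nhdsWithin 0 (Set.Icc (0:ℝ) 1)) (nhds (u 0)) :=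
    hu_cont 0 ⟨le_rfl, one_pos.le⟩
  have hut : Tendsto (fun t : ℝ => u t) (nhdsWithin 0 (Set.Ioo (0:ℝ) 2⁻¹)) (nhds (u 0)) :=
    huat0.mono_left (nhdsWithin_mono _ hsubIcc)
  have hmap2 : Tendsto (fun t : ℝ => 2*t) (nhdsWithin 0 (Set.Ioo (0:ℝ) 2⁻¹))
      (nhdsWithin 0 (Set.Icc (0:ℝ) 1)) := by
    apply tendsto_nhdsWithin_of_tendsto_nhds_of_eventually_within
    · have : Tendsto (fun t : ℝ => 2*t) (nhds 0) (nhds (2*0)) :=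
        (continuous_const.mul continuous_id).tendsto 0
      simpa using this.mono_left nhdsWithin_le_nhds
    · filter_upwards [self_mem_nhdsWithin] with t ht
      constructor <;> [linarith [ht.1]; linarith [ht.2]]
  have hu2t : Tendsto (fun t : ℝ => u (2*t)) (nhdsWithin 0 (Set.Ioo (0:ℝ) 2⁻¹)) (nhds (u 0)) :=
    huat0.comp hmap2
  have hg0 : Tendsto g (nhdsWithin 0 (Set.Ioo (0:ℝ) 2⁻¹)) (nhds 0) := by
    apply squeeze_zero'
    · filter_upwards [self_mem_nhdsWithin] with t ht
      exact hgnn t (hsubIcc ht)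
    · filter_upwards [self_mem_nhdsWithin] with t ht
      have ht2 : t < 2*t := by linarith [ht.1]
      obtain ⟨σ, hσ, hslope⟩ := exists_hasDerivAt_eq_slope u u' ht2
        (hu_cont.mono (fun x hx => ⟨le_trans ht.1.le hx.1, by
          have h2' := hx.2; have h3' := ht.2; linarith⟩))
        (fun x hx => hUdAt x ⟨lt_trans ht.1 hx.1, by have := hx.2; have := ht.2; linarith⟩)
      have hσ01 : σ ∈ Set.Ioo (0:ℝ) 1 := ⟨lt_trans ht.1 hσ.1, by have := hσ.2; have := ht.2; linarith⟩
      have h1 : g t ≤ g σ := monoAux hgpkg ht.1 hσ.1.le hσ01.2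
      have hu'σ : 0 ≤ u' σ := (hrec σ ⟨hσ01.1.le, hσ01.2.le⟩).2
      have hσpow : σ ^ (m+1) ≤ 2*t := by
        calc σ^(m+1) ≤ (2*t)^(m+1) := pow_le_pow_left₀ hσ01.1.le (le_of_lt hσ.2) _
        _ ≤ (2*t)^1 := pow_le_pow_of_le_one (by linarith [ht.1]) (by have := ht.2; linarith)
            (by omega)
        _ = 2*t := pow_one _
      have haσ : a (σ/ε) ≤ M := (haL σ hσ01.1.le).2
      have haσ0 : 0 < a (σ/ε) := lt_of_lt_of_le hc₀ (haL σ hσ01.1.le).1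
      have hΔ : u (2*t) - u t = t * u' σ := by
        rw [hslope, show 2*t - t = t from by ring,
          mul_comm t ((u (2*t) - u t)/t), div_mul_cancel₀ _ (ne_of_gt ht.1)]
      calc g t ≤ g σ := h1
      _ = σ^(m+1) * a (σ/ε) * u' σ := rfl
      _ ≤ (2*t) * M * u' σ := by
        exact mul_le_mul (mul_le_mul hσpow haσ haσ0.le (by linarith [ht.1])) le_rfl hu'σ
          (mul_nonneg (by linarith [ht.1]) hMpos.le)
      _ = 2*M*(u (2*t) - u t) := by rw [hΔ]; ring
    · have : Tendsto (fun t : ℝ => 2*M*(u (2*t) - u t))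
          (nhdsWithin 0 (Set.Ioo (0:ℝ) 2⁻¹)) (nhds (2*M*(u 0 - u 0))) :=
        ((hu2t.sub hut).const_mul _)
      simpa using this
  have hh0 : Tendsto h (nhdsWithin 0 (Set.Ioo (0:ℝ) 2⁻¹)) (nhds 0) := by
    apply squeeze_zero'
    · filter_upwards [self_mem_nhdsWithin] with t ht
      exact hhnn t (hsubIcc ht)
    · filter_upwards [self_mem_nhdsWithin] with t ht
      have hF0 : 0 ≤ f (u t) := hfu t (hsubIcc ht)
      have hbM : b (t/ε) ≤ M := (hbL t ht.1.le).2
      have hb0 : 0 ≤ b (t/ε) := hc₀.le.trans (hbL t ht.1.le).1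
      have htpow : t^(m+1) ≤ t := by
        calc t^(m+1) ≤ t^1 := pow_le_pow_of_le_one ht.1.le (by have := ht.2; linarith) (by omega)
        _ = t := pow_one _
      calc h t = t^(m+1) * b (t/ε) * f (u t) := rfl
      _ ≤ t * M * f (u t) := by
        exact mul_le_mul (mul_le_mul htpow hbM hb0 ht.1.le) le_rfl hF0
          (mul_nonneg ht.1.le hMpos.le)
      _ = t * (M * f (u t)) := by ring
    · have h1 : Tendsto (fun t : ℝ => t) (nhdsWithin 0 (Set.Ioo (0:ℝ) 2⁻¹)) (nhds 0) :=
        tendsto_id.mono_left nhdsWithin_le_nhds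
      have h2 : Tendsto (fun t : ℝ => M * f (u t)) (nhdsWithin 0 (Set.Ioo (0:ℝ) 2⁻¹))
          (nhds (M * f (u 0))) := ((hf1.continuous.tendsto (u 0)).comp hut).const_mul _
      simpa using h1.mul h2
  have hψ0 : Tendsto ψ (nhdsWithin 0 (Set.Ioo (0:ℝ) 2⁻¹)) (nhds 0) := by
    have h1 : Tendsto (fun t : ℝ => Real.exp (lam*t)) (nhdsWithin 0 (Set.Ioo (0:ℝ) 2⁻¹))
        (nhds 1) := by
      have hc' : Continuous fun t : ℝ => Real.exp (lam * t) :=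
        Real.continuous_exp.comp (continuous_const.mul continuous_id)
      have := (hc'.tendsto 0).mono_left (nhdsWithin_le_nhds
        (s := Set.Ioo (0:ℝ) 2⁻¹) (a := (0:ℝ)))
      simpa using this
    have h2 : Tendsto z (nhdsWithin 0 (Set.Ioo (0:ℝ) 2⁻¹)) (nhds 0) := by
      have := (hh0.div_const (ε^2)).sub (hg0.const_mul lam)
      simpa [hzdef] using this
    have := h1.mul h2
    simpa [hψdef] using this
  -- nonnegativity of z on (0,1)
  have hznn : ∀ s ∈ Set.Ioo (0:ℝ) 1, 0 ≤ z s := by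
    intro s hs
    have hψs : 0 ≤ ψ s := by
      have hm₀pos : 0 < min 2⁻¹ s := lt_min (by norm_num) hs.1
      have hNB : (nhdsWithin (0:ℝ) (Set.Ioo (0:ℝ) (min 2⁻¹ s))).NeBot := by
        apply mem_closure_iff_nhdsWithin_neBot.mp
        rw [closure_Ioo (ne_of_lt hm₀pos)]
        exact ⟨le_rfl, hm₀pos.le⟩
      have hlim : Tendsto ψ (nhdsWithin 0 (Set.Ioo (0:ℝ) (min 2⁻¹ s))) (nhds 0) :=
        hψ0.mono_left (nhdsWithin_mono _
          (fun t ht => ⟨ht.1, lt_of_lt_of_le ht.2 (min_le_left _ _)⟩))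
      refine le_of_tendsto hlim ?_
      filter_upwards [self_mem_nhdsWithin] with t ht
      exact monoAux hψd ht.1 (le_of_lt (lt_of_lt_of_le ht.2 (min_le_right _ _))) hs.2
    have hψs' : 0 ≤ Real.exp (lam * s) * z s := by simpa [hψdef] using hψs
    exact (mul_nonneg_iff_of_pos_left (Real.exp_pos (lam * s))).mp hψs'
  -- φ monotone
  have hφd : ∀ s ∈ Set.Ioo (0:ℝ) 1, ∃ D, 0 ≤ D ∧
      HasDerivAt (fun t : ℝ => Real.exp (-(lam*t)) * g t) D s := by
    intro s hs
    have hexp : HasDerivAt (fun t : ℝ => Real.exp (-(lam*t)))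
        (Real.exp (-(lam*s)) * (-lam)) s := by
      simpa [Function.comp_def] using (Real.hasDerivAt_exp (-(lam*s))).comp s
        (((hasDerivAt_id s).const_mul lam).neg)
    refine ⟨_, ?_, hexp.mul (hgd s hs)⟩
    have hid : Real.exp (-(lam*s))*(-lam)*g s + Real.exp (-(lam*s))*(h s/ε^2)
        = Real.exp (-(lam*s)) * z s := by
      simp only [hzdef]; ring
    rw [hid]
    exact mul_nonneg (Real.exp_pos _).le (hznn s hs)
  -- limit of φ at 1
  have hacont : Continuous (fun t : ℝ => t^(m+1) * a (t/ε)) :=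
    (continuous_pow _).mul (hadiff.continuous.comp (continuous_id.div_const ε))
  have hg1lim : Tendsto g (nhdsWithin 1 (Set.Ioo (0:ℝ) 1)) (nhds (g 1)) := by
    have h1 : Tendsto u' (nhdsWithin 1 (Set.Ioc (0:ℝ) 1)) (nhds (u' 1)) :=
      hu'_cont 1 ⟨one_pos, le_rfl⟩
    have h2 : Tendsto u' (nhdsWithin 1 (Set.Ioo (0:ℝ) 1)) (nhds (u' 1)) :=
      h1.mono_left (nhdsWithin_mono _ Set.Ioo_subset_Ioc_self)
    have h3 : Tendsto (fun t : ℝ => t^(m+1) * a (t/ε)) (nhdsWithin 1 (Set.Ioo (0:ℝ) 1))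
        (nhds (1^(m+1) * a (1/ε))) := (hacont.tendsto 1).mono_left nhdsWithin_le_nhds
    have := h3.mul h2
    simpa [hgdef] using this
  have hφ1 : Tendsto (fun t : ℝ => Real.exp (-(lam*t)) * g t) (nhdsWithin 1 (Set.Ioo (0:ℝ) 1))
      (nhds (Real.exp (-(lam*1)) * g 1)) := by
    have hec : Continuous fun t : ℝ => Real.exp (-(lam*t)) :=
      Real.continuous_exp.comp (continuous_const.mul continuous_id).neg
    exact ((hec.tendsto 1).mono_left nhdsWithin_le_nhds).mul hg1lim
  have hmain : ∀ s ∈ Set.Ioo (0:ℝ) 1,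
      Real.exp (-(lam*s)) * g s ≤ Real.exp (-(lam*1)) * g 1 := by
    intro s hs
    have hNB1 : (nhdsWithin (1:ℝ) (Set.Ioo (0:ℝ) 1)).NeBot := by
      apply mem_closure_iff_nhdsWithin_neBot.mp
      rw [closure_Ioo (by norm_num : (0:ℝ) ≠ 1)]
      exact ⟨zero_le_one, le_rfl⟩
    refine ge_of_tendsto hφ1 ?_
    filter_upwards [self_mem_nhdsWithin,
      (eventually_gt_nhds hs.2).filter_mono nhdsWithin_le_nhds] with t ht hst
    exact monoAux hφd hs.1 hst.le ht.2
  -- bound at 1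
  have ha1pos : 0 < a (1/ε) := lt_of_lt_of_le hc₀ (haL 1 zero_le_one).1
  have hg1b : g 1 ≤ a (1/ε) * e θ₀ / ε := by
    have hu'1 : u' 1 = e (u 1) / ε := by
      field_simp
      linarith [hbc]
    have he1 : e (u 1) ≤ e θ₀ := heAnti (hrec 1 ⟨zero_le_one, le_rfl⟩).1
    have hgeq : g 1 = a (1/ε) * (e (u 1)/ε) := by
      simp [hgdef, hu'1]
    rw [hgeq, mul_div_assoc]
    exact mul_le_mul_of_nonneg_left (div_le_div_of_nonneg_right he1 hε.le) ha1pos.le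
  have h2AE : a (1/ε) * e θ₀ / ε ≤ 2/ε * a (1/ε) * e θ₀ := by
    calc a (1/ε) * e θ₀ / ε ≤ 2*(a (1/ε) * e θ₀)/ε :=
          div_le_div_of_nonneg_right (by nlinarith [mul_pos ha1pos (hePos θ₀)]) hε.le
    _ = 2/ε * a (1/ε) * e θ₀ := by ring
  -- conclusion
  intro s hs
  refine ⟨hgnn s hs, ?_⟩
  have hRHSpos : 0 < (2/ε) * a (1/ε) * e θ₀ * Real.exp (-(Real.sqrt κ/ε) * (1-s)) := by
    have := hePos θ₀
    have := Real.exp_pos (-(Real.sqrt κ/ε) * (1-s))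
    positivity
  rcases eq_or_lt_of_le hs.1 with h0 | h0
  · -- s = 0
    subst h0
    simp only [hu'zero, mul_zero]
    exact hRHSpos.le
  rcases eq_or_lt_of_le hs.2 with h1 | h1
  · -- s = 1
    subst h1
    calc g 1 ≤ a (1/ε) * e θ₀ / ε := hg1b
    _ ≤ (2/ε) * a (1/ε) * e θ₀ * Real.exp (-(Real.sqrt κ/ε) * (1-1)) := by
      rw [sub_self, mul_zero, Real.exp_zero, mul_one]
      exact h2AE
  · -- s ∈ (0,1)
    have hsIoo : s ∈ Set.Ioo (0:ℝ) 1 := ⟨h0, h1⟩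
    have hstep := hmain s hsIoo
    have hEpos : (0:ℝ) < Real.exp (lam*s) := Real.exp_pos _
    have hkey : g s ≤ Real.exp (-(lam*(1-s))) * g 1 := by
      have h2 : Real.exp (-(lam*(1-s))) = Real.exp (lam*s) * Real.exp (-(lam*1)) := by
        rw [← Real.exp_add]; congr 1; ring
      calc g s = Real.exp (lam*s) * (Real.exp (-(lam*s)) * g s) := by
            rw [← mul_assoc, ← Real.exp_add]; simp
      _ ≤ Real.exp (lam*s) * (Real.exp (-(lam*1)) * g 1) :=
        mul_le_mul_of_nonneg_left hstep hEpos.le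
      _ = Real.exp (-(lam*(1-s))) * g 1 := by rw [h2]; ring
    have hexpid : Real.exp (-(lam*(1-s))) = Real.exp (-(Real.sqrt κ/ε) * (1-s)) := by
      rw [hlamdef]; congr 1; ring
    calc s ^ (m+1) * a (s/ε) * u' s = g s := rfl
    _ ≤ Real.exp (-(lam*(1-s))) * g 1 := hkey
    _ ≤ Real.exp (-(lam*(1-s))) * (a (1/ε) * e θ₀ / ε) :=
      mul_le_mul_of_nonneg_left hg1b (Real.exp_pos _).le
    _ ≤ (2/ε) * a (1/ε) * e θ₀ * Real.exp (-(Real.sqrt κ/ε) * (1-s)) := by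
      rw [hexpid]
      calc Real.exp (-(Real.sqrt κ/ε) * (1-s)) * (a (1/ε) * e θ₀ / ε)
          ≤ Real.exp (-(Real.sqrt κ/ε) * (1-s)) * (2/ε * a (1/ε) * e θ₀) :=
            mul_le_mul_of_nonneg_left h2AE (Real.exp_pos _).le
      _ = (2/ε) * a (1/ε) * e θ₀ * Real.exp (-(Real.sqrt κ/ε) * (1-s)) := by ring
end
end
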